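/- arXiv:2205.10811 — 2 statements merged into one kernel-verified Lean document; each statement's English description precedes it below -/
import Mathlib

section
/- Let k, b be positive integers and let ω be a set partition of {1,…,2k} with b blocks and r(ω) = r. Then for all positive integers p, n one has |Π_S(ω)| ≤ p^{r+1}·n^{b−r}. Moreover, if ω ∈ SS_b(2k) and p = p(n) satisfies p/n → y ∈ (0,∞), then |Π_S(ω)| / (p^{r+1}·n^{b−r}) → 1 as n → ∞. -/
open MeasureTheory Filter Finset ProbabilityTheory Matrix
open scoped ENNReal NNReal Topology

namespace RMT

/-! ### Combinatorial notions: circuits, words (set partitions) -/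

/-- A circuit of length `2k`: a map `π : {0,…,2k} → ℤ` (extended by `0` elsewhere) with
`π 0 = π (2k)`, even positions in `{1,…,p}` and odd positions in `{1,…,n}`. -/
def IsCircuit (p n k : ℕ) (π : ℕ → ℤ) : Prop :=
  π 0 = π (2 * k) ∧
    (∀ i, i ≤ k → 1 ≤ π (2 * i) ∧ π (2 * i) ≤ (p : ℤ)) ∧
    (∀ i, 1 ≤ i → i ≤ k → 1 ≤ π (2 * i - 1) ∧ π (2 * i - 1) ≤ (n : ℤ)) ∧
    (∀ i, 2 * k < i → π i = 0)

/-- The entry index of a circuit at position `i`: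
`(π (i-1), π i)` if `i` is odd, `(π i, π (i-1))` if `i` is even. -/
def entryIdx (π : ℕ → ℤ) (i : ℕ) : ℤ × ℤ :=
  if Odd i then (π (i - 1), π i) else (π i, π (i - 1))

/-- The edge value of a circuit at position `i` for a link function `L`:
`ξ_π(2i−1) = L (π (2i−2)) (π (2i−1))` and `ξ_π(2i) = L (π (2i)) (π (2i−1))`. -/
def xiIdx (L : ℤ → ℤ → ℤ) (π : ℕ → ℤ) (i : ℕ) : ℤ :=
  if Odd i then L (π (i - 1)) (π i) else L (π i) (π (i - 1))

/-- `i` and `j` lie in the same block of the set partition `ω`. -/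
def sameBlock {s : Finset ℕ} (ω : Finpartition s) (i j : ℕ) : Prop :=
  ∃ B ∈ ω.parts, i ∈ B ∧ j ∈ B

/-- The class `Π_S(ω)` of circuits whose entry-index match structure is exactly `ω`. -/
def PiS (p n k : ℕ) (ω : Finpartition (Finset.Icc 1 (2 * k))) : Set (ℕ → ℤ) :=
  {π | IsCircuit p n k π ∧
    ∀ i ∈ Finset.Icc 1 (2 * k), ∀ j ∈ Finset.Icc 1 (2 * k),
      (sameBlock ω i j ↔ entryIdx π i = entryIdx π j)}

/-- The class `Π(ω)` of circuits, for a general link function `L`. -/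
def PiL (L : ℤ → ℤ → ℤ) (p n k : ℕ) (ω : Finpartition (Finset.Icc 1 (2 * k))) : Set (ℕ → ℤ) :=
  {π | IsCircuit p n k π ∧
    ∀ i ∈ Finset.Icc 1 (2 * k), ∀ j ∈ Finset.Icc 1 (2 * k),
      (sameBlock ω i j ↔ xiIdx L π i = xiIdx L π j)}

/-- `r(ω)`: the number of blocks of `ω` whose minimum element is even. -/
def rIdx {s : Finset ℕ} (ω : Finpartition s) : ℕ :=
  (ω.parts.filter fun B => Even (WithBot.unbotD 1 B.min)).card

/-- A partition is even if every block has even cardinality. -/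
def EvenPartition {s : Finset ℕ} (ω : Finpartition s) : Prop :=
  ∀ B ∈ ω.parts, Even B.card

/-- A partition is symmetric if every block has equally many odd and even elements. -/
def SymmetricPartition {s : Finset ℕ} (ω : Finpartition s) : Prop :=
  ∀ B ∈ ω.parts, (B.filter fun x => Odd x).card = (B.filter fun x => Even x).card

/-- A pair partition: every block has exactly two elements. -/
def PairPartition {s : Finset ℕ} (ω : Finpartition s) : Prop :=
  ∀ B ∈ ω.parts, B.card = 2

/-- Non-crossing partition. -/
def NonCrossing {s : Finset ℕ} (ω : Finpartition s) : Prop :=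
  ¬ ∃ B ∈ ω.parts, ∃ B' ∈ ω.parts, B ≠ B' ∧
      ∃ a ∈ B, ∃ c ∈ B, ∃ b ∈ B', ∃ d ∈ B', a < b ∧ b < c ∧ c < d

/-- Special symmetric partition: every block has even size, and between any two
successive elements of a block, every other block has an even number of elements,
equally many of them at odd and even positions. -/
def SpecialSymmetric {s : Finset ℕ} (ω : Finpartition s) : Prop :=
  (∀ B ∈ ω.parts, Even B.card) ∧
    ∀ B ∈ ω.parts, ∀ i ∈ B, ∀ j ∈ B, i < j → (∀ x ∈ B, ¬(i < x ∧ x < j)) →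
      ∀ B' ∈ ω.parts, B' ≠ B →
        Even (B' ∩ Finset.Ioo i j).card ∧
          ((B' ∩ Finset.Ioo i j).filter fun x => Odd x).card =
            ((B' ∩ Finset.Ioo i j).filter fun x => Even x).card

/-! ### Spectral notions -/

/-- The empirical spectral distribution of the covariance matrix `A * Aᴴ` of a real
`p × n` matrix `A`: the uniform probability measure on its eigenvalues. -/
noncomputable def esdCov {p n : ℕ} (A : Matrix (Fin p) (Fin n) ℝ) : Measure ℝ :=
  (p : ℝ≥0∞)⁻¹ • ∑ i : Fin p,
    Measure.dirac ((Matrix.isHermitian_mul_conjTranspose_self A).eigenvalues i)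

/-- Weak convergence of a sequence of measures on `ℝ` to `μ`. -/
def WeakLim (μs : ℕ → Measure ℝ) (μ : Measure ℝ) : Prop :=
  ∀ f : BoundedContinuousFunction ℝ ℝ,
    Tendsto (fun n => ∫ v, f v ∂(μs n)) atTop (𝓝 (∫ v, f v ∂μ))

/-- Expected empirical spectral distribution of the random covariance matrix `A·Aᵀ`. -/
noncomputable def eesd {Ω : Type*} [MeasurableSpace Ω] (P : Measure Ω) {p n : ℕ}
    (A : Ω → Matrix (Fin p) (Fin n) ℝ) : Measure ℝ :=
  P.bind fun ω => esdCov (A ω)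

/-- Truncation at level `t`: `v·1[|v| ≤ t]`. -/
noncomputable def trunc (t : ℝ≥0∞) (v : ℝ) : ℝ :=
  if ENNReal.ofReal |v| ≤ t then v else 0

/-- The above-threshold part: `v·1[|v| > t]`. -/
noncomputable def truncAbove (t : ℝ≥0∞) (v : ℝ) : ℝ :=
  if ENNReal.ofReal |v| ≤ t then 0 else v

/-- The Lévy distance between two "distribution functions". -/
noncomputable def levyDist (F G : ℝ → ℝ) : ℝ :=
  sInf {ε : ℝ | 0 < ε ∧ ∀ x : ℝ, F (x - ε) - ε ≤ G x ∧ G x ≤ F (x + ε) + ε}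

/-- The cumulative distribution function of a measure on `ℝ`. -/
noncomputable def cdf (μ : Measure ℝ) : ℝ → ℝ := fun v => (μ (Set.Iic v)).toReal

/-! ### Assumption A -/

/-- `M_{2k} = sup_{[0,1]²} |g_{2k}|`, `M_{odd} = 0`, for a two-variable kernel family. -/
noncomputable def Msup2 (glim : ℕ → ℝ → ℝ → ℝ) (j : ℕ) : ℝ :=
  if Even j then
    sSup ((fun z : ℝ × ℝ => |glim (j / 2) z.1 z.2|) '' (Set.Icc (0 : ℝ) 1 ×ˢ Set.Icc (0 : ℝ) 1))
  else 0

/-- `α_m = Σ_{σ ∈ P(m)} ∏_{V ∈ σ} M_{|V|}` (sum over all set partitions of `{1,…,m}`). -/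
noncomputable def alphaP (M : ℕ → ℝ) (m : ℕ) : ℝ :=
  ∑ σ : Finpartition (Finset.Icc 1 m), ∏ B ∈ σ.parts, M B.card

/-- Carleman's condition `Σ_{k ≥ 1} α_{2k}^{-1/(2k)} = ∞`, where `α_k = alphaP M (2k)`. -/
def Carleman (M : ℕ → ℝ) : Prop :=
  ¬ Summable fun k : ℕ =>
      alphaP M (2 * (2 * (k + 1))) ^ (-(1 : ℝ) / (2 * (k + 1) : ℝ))

/-- Assumption A of Bose–Sen for the matrix `X_n = (x_{ij,n})` with thresholds `t n`,
kernels `g k n` (representing `g_{2k,n}`) and limits `glim k` (representing `g_{2k}`). -/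
structure AssumptionA {Ω : Type*} [MeasurableSpace Ω] (P : Measure Ω)
    (p : ℕ → ℕ) (y : ℝ) (x : (n : ℕ) → Fin (p n) → Fin n → Ω → ℝ)
    (t : ℕ → ℝ≥0∞) (g : ℕ → ℕ → ℝ → ℝ → ℝ) (glim : ℕ → ℝ → ℝ → ℝ) : Prop where
  hprob : IsProbabilityMeasure P
  hy : 0 < y
  hp_lim : Tendsto (fun n => (p n : ℝ) / n) atTop (𝓝 y)
  hp_top : Tendsto p atTop atTop
  hmeas : ∀ n i j, Measurable (x n i j)
  hindep : ∀ n, iIndepFun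
      (fun ij : Fin (p n) × Fin n => x n ij.1 ij.2) P
  ht_pos : ∀ n, 0 < t n
  hg_eq : ∀ k, 1 ≤ k → ∀ n, ∀ i : Fin (p n), ∀ j : Fin n,
    (n : ℝ) * ∫ ω, trunc (t n) (x n i j ω) ^ (2 * k) ∂P =
      g k n ((i.1 + 1 : ℝ) / (p n)) ((j.1 + 1 : ℝ) / n)
  hg_odd : ∀ k, 1 ≤ k → ∀ α : ℝ, α < 1 →
    Tendsto (fun n : ℕ => (n : ℝ) ^ α *
        ⨆ i : Fin (p n), ⨆ j : Fin n,
          |∫ ω, trunc (t n) (x n i j ω) ^ (2 * k - 1) ∂P|) atTop (𝓝 0)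
  hg_bdd : ∀ k n, 1 ≤ k → ∃ C : ℝ,
    ∀ z ∈ Set.Icc (0 : ℝ) 1 ×ˢ Set.Icc (0 : ℝ) 1, |g k n z.1 z.2| ≤ C
  hg_riemann : ∀ k n, 1 ≤ k →
    ∀ᵐ z ∂(volume.restrict (Set.Icc (0 : ℝ) 1 ×ˢ Set.Icc (0 : ℝ) 1)),
      ContinuousAt (fun z : ℝ × ℝ => g k n z.1 z.2) z
  hg_unif : ∀ k, 1 ≤ k →
    TendstoUniformlyOn (fun n z => g k n z.1 z.2) (fun z : ℝ × ℝ => glim k z.1 z.2)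
      atTop (Set.Icc (0 : ℝ) 1 ×ˢ Set.Icc (0 : ℝ) 1)
  hCarleman : Carleman (Msup2 glim)

/-- The truncated matrix `Z_n` with entries `y_{ij} = x_{ij}·1[|x_{ij}| ≤ t_n]`. -/
noncomputable def Zmat {Ω : Type*} (p : ℕ → ℕ) (x : (n : ℕ) → Fin (p n) → Fin n → Ω → ℝ)
    (t : ℕ → ℝ≥0∞) (n : ℕ) (ω : Ω) : Matrix (Fin (p n)) (Fin n) ℝ :=
  Matrix.of fun i j => trunc (t n) (x n i j ω)

/-- The matrix `X_n` with entries `x_{ij,n}`. -/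
def Xmat {Ω : Type*} (p : ℕ → ℕ) (x : (n : ℕ) → Fin (p n) → Fin n → Ω → ℝ)
    (n : ℕ) (ω : Ω) : Matrix (Fin (p n)) (Fin n) ℝ :=
  Matrix.of fun i j => x n i j ω

end RMT

namespace RMT

/-! ### vertex maps -/

def Ev (i : ℕ) : ℕ := if Odd i then i - 1 else i
def Ov (i : ℕ) : ℕ := if Odd i then i else i - 1

lemma entryIdx_eq (π : ℕ → ℤ) (i : ℕ) : entryIdx π i = (π (Ev i), π (Ov i)) := by
  unfold entryIdx Ev Ov; by_cases h : Odd i <;> simp [h]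

lemma Ev_le (i : ℕ) : Ev i ≤ i := by unfold Ev; split <;> omega
lemma Ov_le (i : ℕ) : Ov i ≤ i := by unfold Ov; split <;> omega
lemma Ev_mod (i : ℕ) (hi : 1 ≤ i) : Ev i % 2 = 0 := by
  unfold Ev; split
  · next h => rcases h with ⟨c, hc⟩; omega
  · next h => rw [Nat.odd_iff] at h; omega
lemma Ov_mod (i : ℕ) (hi : 1 ≤ i) : Ov i % 2 = 1 := by
  unfold Ov; split
  · next h => rcases h with ⟨c, hc⟩; omega
  · next h => rw [Nat.odd_iff] at h; omega
lemma Ev_of_even (i : ℕ) (h : i % 2 = 0) : Ev i = i := by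
  unfold Ev; rw [if_neg]; rw [Nat.odd_iff]; omega
lemma Ev_of_odd (i : ℕ) (h : i % 2 = 1) : Ev i = i - 1 := by
  unfold Ev; rw [if_pos]; rw [Nat.odd_iff]; omega
lemma Ov_of_even (i : ℕ) (h : i % 2 = 0) : Ov i = i - 1 := by
  unfold Ov; rw [if_neg]; rw [Nat.odd_iff]; omega
lemma Ov_of_odd (i : ℕ) (h : i % 2 = 1) : Ov i = i := by
  unfold Ov; rw [if_pos]; rw [Nat.odd_iff]; omega

/-! ### the equivalence on vertices -/

variable {k : ℕ}

def Step (ω : Finpartition (Finset.Icc 1 (2 * k))) (u v : ℕ) : Prop :=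
  ∃ B ∈ ω.parts, ∃ i ∈ B, ∃ j ∈ B, (u = Ev i ∧ v = Ev j) ∨ (u = Ov i ∧ v = Ov j)

def Rel (ω : Finpartition (Finset.Icc 1 (2 * k))) : ℕ → ℕ → Prop :=
  Relation.EqvGen (Step ω)

lemma mem_Icc_of_mem_parts {ω : Finpartition (Finset.Icc 1 (2 * k))} {B : Finset ℕ}
    (hB : B ∈ ω.parts) {i : ℕ} (hi : i ∈ B) : 1 ≤ i ∧ i ≤ 2 * k := by
  have := ω.le hB hi
  rw [Finset.mem_Icc] at this; exact this

lemma step_symm {ω : Finpartition (Finset.Icc 1 (2 * k))} {u v : ℕ} (h : Step ω u v) :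
    Step ω v u := by
  obtain ⟨B, hB, i, hi, j, hj, hc⟩ := h
  exact ⟨B, hB, j, hj, i, hi, by tauto⟩

lemma rel_refl (ω : Finpartition (Finset.Icc 1 (2 * k))) (u : ℕ) : Rel ω u u :=
  Relation.EqvGen.refl u

lemma rel_symm {ω : Finpartition (Finset.Icc 1 (2 * k))} {u v : ℕ} (h : Rel ω u v) :
    Rel ω v u := Relation.EqvGen.symm u v h

lemma rel_trans {ω : Finpartition (Finset.Icc 1 (2 * k))} {u v w : ℕ}
    (h : Rel ω u v) (h' : Rel ω v w) : Rel ω u w := Relation.EqvGen.trans u v w h h'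

lemma step_parity {ω : Finpartition (Finset.Icc 1 (2 * k))} {u v : ℕ} (h : Step ω u v) :
    u % 2 = v % 2 ∧ u ≤ 2 * k ∧ v ≤ 2 * k := by
  obtain ⟨B, hB, i, hi, j, hj, hc⟩ := h
  have h1 := mem_Icc_of_mem_parts hB hi
  have h2 := mem_Icc_of_mem_parts hB hj
  rcases hc with ⟨rfl, rfl⟩ | ⟨rfl, rfl⟩
  · refine ⟨by rw [Ev_mod i h1.1, Ev_mod j h2.1], ?_, ?_⟩
    · exact le_trans (Ev_le i) h1.2
    · exact le_trans (Ev_le j) h2.2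
  · refine ⟨by rw [Ov_mod i h1.1, Ov_mod j h2.1], ?_, ?_⟩
    · exact le_trans (Ov_le i) h1.2
    · exact le_trans (Ov_le j) h2.2

lemma rel_parity {ω : Finpartition (Finset.Icc 1 (2 * k))} {u v : ℕ} (h : Rel ω u v) :
    u % 2 = v % 2 ∧ (u ≤ 2 * k ↔ v ≤ 2 * k) := by
  induction h with
  | rel u v h => exact ⟨(step_parity h).1, by have := (step_parity h); tauto⟩
  | refl u => exact ⟨rfl, Iff.rfl⟩
  | symm u v _ ih => exact ⟨ih.1.symm, ih.2.symm⟩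
  | trans u v w _ _ ih1 ih2 => exact ⟨ih1.1.trans ih2.1, ih1.2.trans ih2.2⟩

open scoped Classical in
noncomputable def cls (ω : Finpartition (Finset.Icc 1 (2 * k))) (i : ℕ) : Finset ℕ :=
  (Finset.range (2 * k + 1)).filter fun j => Rel ω i j

lemma mem_cls {ω : Finpartition (Finset.Icc 1 (2 * k))} {i j : ℕ} :
    j ∈ cls ω i ↔ j ≤ 2 * k ∧ Rel ω i j := by
  simp [cls, Finset.mem_filter, Nat.lt_succ_iff]

lemma mem_cls_self {ω : Finpartition (Finset.Icc 1 (2 * k))} {i : ℕ} (hi : i ≤ 2 * k) :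
    i ∈ cls ω i := mem_cls.2 ⟨hi, rel_refl ω i⟩

lemma cls_eq_of_rel {ω : Finpartition (Finset.Icc 1 (2 * k))} {u v : ℕ} (h : Rel ω u v) :
    cls ω u = cls ω v := by
  ext j; rw [mem_cls, mem_cls]
  exact and_congr_right fun _ => ⟨fun h' => rel_trans (rel_symm h) h',
    fun h' => rel_trans h h'⟩

lemma rel_of_cls_eq {ω : Finpartition (Finset.Icc 1 (2 * k))} {u v : ℕ} (hu : u ≤ 2 * k)
    (h : cls ω u = cls ω v) : Rel ω u v := by
  have : u ∈ cls ω v := h ▸ mem_cls_self hu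
  exact rel_symm (mem_cls.1 this).2

/-! ### block minima -/

def bmin (B : Finset ℕ) : ℕ := WithBot.unbotD 1 B.min

lemma bmin_eq_min' {B : Finset ℕ} (h : B.Nonempty) : bmin B = B.min' h := by
  rw [bmin, ← Finset.coe_min' h]; rfl

lemma bmin_mem {B : Finset ℕ} (h : B.Nonempty) : bmin B ∈ B := by
  rw [bmin_eq_min' h]; exact B.min'_mem h

lemma bmin_le {B : Finset ℕ} (h : B.Nonempty) {x : ℕ} (hx : x ∈ B) : bmin B ≤ x := by
  rw [bmin_eq_min' h]; exact B.min'_le x hx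



variable {k : ℕ} {ω : Finpartition (Finset.Icc 1 (2 * k))}

lemma exists_block {i : ℕ} (h1 : 1 ≤ i) (h2 : i ≤ 2 * k) :
    ∃ B ∈ ω.parts, i ∈ B :=
  ω.exists_mem (Finset.mem_Icc.2 ⟨h1, h2⟩)

lemma bmin_parity_block {B : Finset ℕ} (hB : B ∈ ω.parts) :
    1 ≤ bmin B ∧ bmin B ≤ 2 * k := by
  have hne := ω.nonempty_of_mem_parts hB
  exact mem_Icc_of_mem_parts hB (bmin_mem hne)

/-- descent to generators, even case -/
lemma even_descent : ∀ i, i ≤ 2 * k → i % 2 = 0 →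
    Rel ω i 0 ∨ ∃ B ∈ ω.parts, bmin B % 2 = 0 ∧ Rel ω i (bmin B) := by
  intro i
  induction i using Nat.strong_induction_on with
  | _ i IH =>
    intro hi he
    rcases Nat.eq_zero_or_pos i with rfl | hpos
    · exact Or.inl (rel_refl ω 0)
    obtain ⟨B, hB, hiB⟩ := exists_block hpos hi
    have hne := ω.nonempty_of_mem_parts hB
    have hm := bmin_mem hne
    have hmle : bmin B ≤ i := bmin_le hne hiB
    have hmIcc := mem_Icc_of_mem_parts hB hm
    rcases eq_or_lt_of_le hmle with heq | hlt
    · right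
      exact ⟨B, hB, heq ▸ he, heq ▸ rel_refl ω i⟩
    · have hstep : Rel ω i (Ev (bmin B)) := by
        apply Relation.EqvGen.rel
        exact ⟨B, hB, i, hiB, bmin B, hm, Or.inl ⟨(Ev_of_even i he).symm, rfl⟩⟩
      have hEvlt : Ev (bmin B) < i := lt_of_le_of_lt (Ev_le _) hlt
      have hEvle : Ev (bmin B) ≤ 2 * k := le_trans (le_of_lt hEvlt) hi
      have hEvmod : Ev (bmin B) % 2 = 0 := Ev_mod _ hmIcc.1
      rcases IH _ hEvlt hEvle hEvmod with h | ⟨C, hC, hC2, hC3⟩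
      · exact Or.inl (rel_trans hstep h)
      · exact Or.inr ⟨C, hC, hC2, rel_trans hstep hC3⟩

/-- descent to generators, odd case -/
lemma odd_descent : ∀ i, i ≤ 2 * k → i % 2 = 1 →
    ∃ B ∈ ω.parts, bmin B % 2 = 1 ∧ Rel ω i (bmin B) := by
  intro i
  induction i using Nat.strong_induction_on with
  | _ i IH =>
    intro hi ho
    have hpos : 1 ≤ i := by omega
    obtain ⟨B, hB, hiB⟩ := exists_block hpos hi
    have hne := ω.nonempty_of_mem_parts hB
    have hm := bmin_mem hne
    have hmle : bmin B ≤ i := bmin_le hne hiB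
    have hmIcc := mem_Icc_of_mem_parts hB hm
    rcases eq_or_lt_of_le hmle with heq | hlt
    · exact ⟨B, hB, heq ▸ ho, heq ▸ rel_refl ω i⟩
    · have hstep : Rel ω i (Ov (bmin B)) := by
        apply Relation.EqvGen.rel
        exact ⟨B, hB, i, hiB, bmin B, hm, Or.inr ⟨(Ov_of_odd i ho).symm, rfl⟩⟩
      have hOvlt : Ov (bmin B) < i := lt_of_le_of_lt (Ov_le _) hlt
      have hOvle : Ov (bmin B) ≤ 2 * k := le_trans (le_of_lt hOvlt) hi
      have hOvmod : Ov (bmin B) % 2 = 1 := Ov_mod _ hmIcc.1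
      obtain ⟨C, hC, hC2, hC3⟩ := IH _ hOvlt hOvle hOvmod
      exact ⟨C, hC, hC2, rel_trans hstep hC3⟩

/-! ### class collections -/

noncomputable def CE (ω : Finpartition (Finset.Icc 1 (2 * k))) : Finset (Finset ℕ) :=
  ((Finset.range (2 * k + 1)).filter fun i => i % 2 = 0).image (cls ω)

noncomputable def CO (ω : Finpartition (Finset.Icc 1 (2 * k))) : Finset (Finset ℕ) :=
  ((Finset.range (2 * k + 1)).filter fun i => i % 2 = 1).image (cls ω)

noncomputable def CT (ω : Finpartition (Finset.Icc 1 (2 * k))) : Finset (Finset ℕ) :=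
  (Finset.range (2 * k + 1)).image (cls ω)

lemma mem_CE {C : Finset ℕ} : C ∈ CE ω ↔ ∃ i, i ≤ 2 * k ∧ i % 2 = 0 ∧ cls ω i = C := by
  simp [CE, Finset.mem_image, Finset.mem_filter, Nat.lt_succ_iff]
  tauto

lemma mem_CO {C : Finset ℕ} : C ∈ CO ω ↔ ∃ i, i ≤ 2 * k ∧ i % 2 = 1 ∧ cls ω i = C := by
  simp [CO, Finset.mem_image, Finset.mem_filter, Nat.lt_succ_iff]
  tauto

lemma CT_eq : CT ω = CE ω ∪ CO ω := by
  ext C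
  simp only [CT, Finset.mem_union, Finset.mem_image, Nat.lt_succ_iff, Finset.mem_range,
    mem_CE, mem_CO]
  constructor
  · rintro ⟨i, hi, rfl⟩
    rcases Nat.even_or_odd i with h | h
    · exact Or.inl ⟨i, hi, by rcases h with ⟨c, hc⟩; omega, rfl⟩
    · exact Or.inr ⟨i, hi, by rw [Nat.odd_iff] at h; omega, rfl⟩
  · rintro (⟨i, hi, _, rfl⟩ | ⟨i, hi, _, rfl⟩) <;> exact ⟨i, hi, rfl⟩

lemma CE_CO_disjoint : Disjoint (CE ω) (CO ω) := by
  rw [Finset.disjoint_left]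
  rintro C hC hC'
  obtain ⟨i, hi, hie, rfl⟩ := mem_CE.1 hC
  obtain ⟨j, hj, hjo, hji⟩ := mem_CO.1 hC'
  have := (rel_parity (rel_of_cls_eq hj hji)).1
  omega

lemma card_CT : (CT ω).card = (CE ω).card + (CO ω).card := by
  rw [CT_eq, Finset.card_union_of_disjoint CE_CO_disjoint]

lemma card_CE_le : (CE ω).card ≤ rIdx ω + 1 := by
  have hsub : CE ω ⊆ insert (cls ω 0)
      ((ω.parts.filter fun B => Even (WithBot.unbotD 1 B.min)).image
        fun B => cls ω (bmin B)) := by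
    intro C hC
    obtain ⟨i, hi, hie, rfl⟩ := mem_CE.1 hC
    rcases even_descent i hi hie with h | ⟨B, hB, hB2, hB3⟩
    · exact Finset.mem_insert.2 (Or.inl (cls_eq_of_rel h))
    · refine Finset.mem_insert.2 (Or.inr (Finset.mem_image.2 ⟨B, ?_, (cls_eq_of_rel hB3).symm⟩))
      refine Finset.mem_filter.2 ⟨hB, ?_⟩
      rw [Nat.even_iff]; exact hB2
  calc (CE ω).card ≤ _ := Finset.card_le_card hsub
    _ ≤ _ + 1 := Finset.card_insert_le _ _
    _ ≤ rIdx ω + 1 := by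
        have := Finset.card_image_le (s := ω.parts.filter fun B => Even (WithBot.unbotD 1 B.min))
          (f := fun B => cls ω (bmin B))
        exact Nat.add_le_add_right this 1

lemma rIdx_le : rIdx ω ≤ ω.parts.card := Finset.card_le_card (Finset.filter_subset _ _)

lemma card_CO_le : (CO ω).card ≤ ω.parts.card - rIdx ω := by
  have hsub : CO ω ⊆ (ω.parts.filter fun B => ¬ Even (WithBot.unbotD 1 B.min)).image
      fun B => cls ω (bmin B) := by
    intro C hC
    obtain ⟨i, hi, hio, rfl⟩ := mem_CO.1 hC
    obtain ⟨B, hB, hB2, hB3⟩ := odd_descent i hi hio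
    refine Finset.mem_image.2 ⟨B, ?_, (cls_eq_of_rel hB3).symm⟩
    refine Finset.mem_filter.2 ⟨hB, ?_⟩
    unfold bmin at hB2; rw [Nat.even_iff]; omega
  have hcard := Finset.card_filter_add_card_filter_not
    (s := ω.parts) (p := fun B => Even (WithBot.unbotD 1 B.min))
  calc (CO ω).card ≤ _ := Finset.card_le_card hsub
    _ ≤ (ω.parts.filter fun B => ¬ Even (WithBot.unbotD 1 B.min)).card :=
        Finset.card_image_le
    _ = ω.parts.card - rIdx ω := by unfold rIdx; omega

variable {k : ℕ} {ω : Finpartition (Finset.Icc 1 (2 * k))}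

lemma card_eq_sum_parts {t : Finset ℕ} (ht : t ⊆ Finset.Icc 1 (2 * k)) :
    t.card = ∑ B ∈ ω.parts, (B ∩ t).card := by
  have hcover : ω.parts.biUnion (fun B => B ∩ t) = t := by
    ext x
    simp only [Finset.mem_biUnion, Finset.mem_inter]
    constructor
    · rintro ⟨B, _, _, h⟩; exact h
    · intro hx
      obtain ⟨B, hB, hxB⟩ := ω.exists_mem (ht hx)
      exact ⟨B, hB, hxB, hx⟩
  have hdisj : ∀ B ∈ ω.parts, ∀ C ∈ ω.parts, B ≠ C → Disjoint (B ∩ t) (C ∩ t) := by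
    intro B hB C hC hne
    rw [Finset.disjoint_left]
    intro x hx hx'
    rw [Finset.mem_inter] at hx hx'
    exact hne (ω.eq_of_mem_parts hB hC hx.1 hx'.1)
  have hcb := Finset.card_biUnion hdisj
  rw [hcover] at hcb
  omega

def OSet (ω : Finpartition (Finset.Icc 1 (2 * k))) (x : ℕ) : Finset (Finset ℕ) :=
  ω.parts.filter fun D => (D ∩ Finset.Icc 1 x).card % 2 = 1

lemma OSet_eq_of {x y : ℕ} (hxy : x ≤ y)
    (h : ∀ D ∈ ω.parts, (D ∩ Finset.Ioc x y).card % 2 = 0) : OSet ω x = OSet ω y := by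
  apply Finset.filter_congr
  intro D hD
  have hsplit : (D ∩ Finset.Icc 1 y).card = (D ∩ Finset.Icc 1 x).card
      + (D ∩ Finset.Ioc x y).card := by
    rw [← Finset.card_union_of_disjoint]
    · congr 1
      ext z
      simp only [Finset.mem_inter, Finset.mem_Icc, Finset.mem_union, Finset.mem_Ioc]
      constructor
      · rintro ⟨h1, h2, h3⟩
        rcases le_or_gt z x with h4 | h4
        · exact Or.inl ⟨h1, h2, h4⟩
        · exact Or.inr ⟨h1, h4, h3⟩
      · rintro (⟨h1, h2, h3⟩ | ⟨h1, h2, h3⟩)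
        · exact ⟨h1, h2, le_trans h3 hxy⟩
        · exact ⟨h1, by omega, h3⟩
    · rw [Finset.disjoint_left]
      intro z hz hz'
      rw [Finset.mem_inter, Finset.mem_Icc] at hz
      rw [Finset.mem_inter, Finset.mem_Ioc] at hz'
      omega
  have := h D hD
  constructor <;> intro hh <;> omega

/-- for a "no-gap" pair `i < j` in a block, parity of positions alternates -/
lemma gap_parity (hss : SpecialSymmetric ω) {B : Finset ℕ} (hB : B ∈ ω.parts)
    {i j : ℕ} (hi : i ∈ B) (hj : j ∈ B) (hij : i < j)
    (hgap : ∀ x ∈ B, ¬(i < x ∧ x < j)) : i % 2 ≠ j % 2 := by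
  have hIoo : Finset.Ioo i j ⊆ Finset.Icc 1 (2 * k) := by
    intro x hx
    rw [Finset.mem_Ioo] at hx
    have h1 := mem_Icc_of_mem_parts hB hi
    have h2 := mem_Icc_of_mem_parts hB hj
    rw [Finset.mem_Icc]; omega
  have hsum := card_eq_sum_parts (ω := ω) hIoo
  have heven : ∀ D ∈ ω.parts, (D ∩ Finset.Ioo i j).card % 2 = 0 := by
    intro D hD
    by_cases hDB : D = B
    · subst hDB
      have : D ∩ Finset.Ioo i j = ∅ := by
        ext x
        simp only [Finset.mem_inter, Finset.mem_Ioo, Finset.notMem_empty, iff_false]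
        rintro ⟨hxD, hx1, hx2⟩
        exact hgap x hxD ⟨hx1, hx2⟩
      rw [this]; rfl
    · have := (hss.2 B hB i hi j hj hij hgap D hD hDB).1
      rw [Nat.even_iff] at this; exact this
  have : (Finset.Ioo i j).card % 2 = 0 := by
    rw [hsum]
    rw [Finset.sum_nat_mod]
    have : ∀ D ∈ ω.parts, (D ∩ Finset.Ioo i j).card % 2 = 0 := heven
    rw [Finset.sum_congr rfl this]
    simp
  rw [Nat.card_Ioo] at this
  omega

/-- the two interval computations -/
lemma interval_calc_A {B : Finset ℕ} (hB : B ∈ ω.parts)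
    {i j : ℕ} (hi : i ∈ B) (hj : j ∈ B) (hij : i < j)
    (hgap : ∀ x ∈ B, ¬(i < x ∧ x < j))
    (heven : ∀ D ∈ ω.parts, D ≠ B → (D ∩ Finset.Ioo i j).card % 2 = 0) :
    ∀ D ∈ ω.parts, (D ∩ Finset.Ioc (i - 1) j).card % 2 = 0 := by
  intro D hD
  have hi1 : 1 ≤ i := (mem_Icc_of_mem_parts hB hi).1
  by_cases hDB : D = B
  · subst hDB
    have : D ∩ Finset.Ioc (i - 1) j = {i, j} := by
      ext x
      simp only [Finset.mem_inter, Finset.mem_Ioc, Finset.mem_insert, Finset.mem_singleton]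
      constructor
      · rintro ⟨hxD, hx1, hx2⟩
        rcases eq_or_lt_of_le hx2 with h | h
        · exact Or.inr h
        · have := hgap x hxD
          left; omega
      · rintro (rfl | rfl)
        · exact ⟨hi, by omega, le_of_lt hij⟩
        · exact ⟨hj, by omega, le_refl _⟩
    rw [this, Finset.card_insert_of_notMem (by simp; omega), Finset.card_singleton]
  · have hiD : i ∉ D := fun h => hDB (ω.eq_of_mem_parts hD hB h hi)
    have hjD : j ∉ D := fun h => hDB (ω.eq_of_mem_parts hD hB h hj)
    have : D ∩ Finset.Ioc (i - 1) j = D ∩ Finset.Ioo i j := by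
      ext x
      simp only [Finset.mem_inter, Finset.mem_Ioc, Finset.mem_Ioo]
      constructor
      · rintro ⟨hxD, hx1, hx2⟩
        have hxi : x ≠ i := fun h => hiD (h ▸ hxD)
        have hxj : x ≠ j := fun h => hjD (h ▸ hxD)
        exact ⟨hxD, by omega, by omega⟩
      · rintro ⟨hxD, hx1, hx2⟩
        exact ⟨hxD, by omega, by omega⟩
    rw [this]
    exact heven D hD hDB

lemma interval_calc_B {B : Finset ℕ} (hB : B ∈ ω.parts)
    {i j : ℕ} (hi : i ∈ B) (hj : j ∈ B) (hij : i < j)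
    (hgap : ∀ x ∈ B, ¬(i < x ∧ x < j))
    (heven : ∀ D ∈ ω.parts, D ≠ B → (D ∩ Finset.Ioo i j).card % 2 = 0) :
    ∀ D ∈ ω.parts, (D ∩ Finset.Ioc i (j - 1)).card % 2 = 0 := by
  intro D hD
  have hIoc : Finset.Ioc i (j - 1) = Finset.Ioo i j := by
    ext x
    rw [Finset.mem_Ioc, Finset.mem_Ioo]
    omega
  rw [hIoc]
  by_cases hDB : D = B
  · subst hDB
    have : D ∩ Finset.Ioo i j = ∅ := by
      ext x
      simp only [Finset.mem_inter, Finset.mem_Ioo, Finset.notMem_empty, iff_false]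
      rintro ⟨hxD, hx1, hx2⟩
      exact hgap x hxD ⟨hx1, hx2⟩
    rw [this]; rfl
  · exact heven D hD hDB

/-- key step: OSet is invariant across a no-gap pair of a block -/
lemma succ_pair (hss : SpecialSymmetric ω) {B : Finset ℕ} (hB : B ∈ ω.parts)
    {i j : ℕ} (hi : i ∈ B) (hj : j ∈ B) (hij : i < j)
    (hgap : ∀ x ∈ B, ¬(i < x ∧ x < j)) :
    OSet ω (Ev i) = OSet ω (Ev j) ∧ OSet ω (Ov i) = OSet ω (Ov j) := by
  have hi1 : 1 ≤ i := (mem_Icc_of_mem_parts hB hi).1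
  have heven : ∀ D ∈ ω.parts, D ≠ B → (D ∩ Finset.Ioo i j).card % 2 = 0 := by
    intro D hD hDB
    have := (hss.2 B hB i hi j hj hij hgap D hD hDB).1
    rw [Nat.even_iff] at this; exact this
  have hpar := gap_parity hss hB hi hj hij hgap
  rcases Nat.even_or_odd i with hie | hio
  · -- i even, j odd
    have hie' : i % 2 = 0 := by rcases hie with ⟨c, hc⟩; omega
    have hjo' : j % 2 = 1 := by omega
    constructor
    · rw [Ev_of_even i hie', Ev_of_odd j hjo']
      exact OSet_eq_of (by omega) (interval_calc_B hB hi hj hij hgap heven)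
    · rw [Ov_of_even i hie', Ov_of_odd j hjo']
      exact OSet_eq_of (by omega) (interval_calc_A hB hi hj hij hgap heven)
  · -- i odd, j even
    have hio' : i % 2 = 1 := by rw [Nat.odd_iff] at hio; exact hio
    have hje' : j % 2 = 0 := by omega
    constructor
    · rw [Ev_of_odd i hio', Ev_of_even j hje']
      exact OSet_eq_of (by omega) (interval_calc_A hB hi hj hij hgap heven)
    · rw [Ov_of_odd i hio', Ov_of_even j hje']
      exact OSet_eq_of (by omega) (interval_calc_B hB hi hj hij hgap heven)

/-- chain along a block -/
lemma block_chain (hss : SpecialSymmetric ω) {B : Finset ℕ} (hB : B ∈ ω.parts) :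
    ∀ j, ∀ i, i ∈ B → j ∈ B → i ≤ j →
      OSet ω (Ev i) = OSet ω (Ev j) ∧ OSet ω (Ov i) = OSet ω (Ov j) := by
  intro j
  induction j using Nat.strong_induction_on with
  | _ j IH =>
    intro i hi hj hij
    rcases eq_or_lt_of_le hij with rfl | hlt
    · exact ⟨rfl, rfl⟩
    · set s := B.filter (fun x => i ≤ x ∧ x < j) with hs
      have hsne : s.Nonempty := ⟨i, by simp [hs, hi]; omega⟩
      set i' := s.max' hsne with hi'
      have hi'mem : i' ∈ s := s.max'_mem hsne
      rw [hs, Finset.mem_filter] at hi'mem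
      obtain ⟨hi'B, hii', hi'j⟩ := hi'mem
      have hgap : ∀ x ∈ B, ¬(i' < x ∧ x < j) := by
        rintro x hx ⟨hx1, hx2⟩
        have hxs : x ∈ s := by rw [hs, Finset.mem_filter]; exact ⟨hx, by omega, hx2⟩
        have := s.le_max' x hxs
        omega
      have h1 := succ_pair hss hB hi'B hj hi'j hgap
      have h2 := IH i' hi'j i hi hi'B hii'
      exact ⟨h2.1.trans h1.1, h2.2.trans h1.2⟩

/-- OSet is an invariant of the vertex equivalence -/
lemma rel_OSet (hss : SpecialSymmetric ω) {u v : ℕ} (h : Rel ω u v) :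
    OSet ω u = OSet ω v := by
  induction h with
  | rel u v h =>
    obtain ⟨B, hB, i, hi, j, hj, hc⟩ := h
    rcases le_total i j with hij | hij
    · have := block_chain hss hB j i hi hj hij
      rcases hc with ⟨rfl, rfl⟩ | ⟨rfl, rfl⟩
      · exact this.1
      · exact this.2
    · have := block_chain hss hB i j hj hi hij
      rcases hc with ⟨rfl, rfl⟩ | ⟨rfl, rfl⟩
      · exact this.1.symm
      · exact this.2.symm
  | refl u => rfl
  | symm u v _ ih => exact ih.symm
  | trans u v w _ _ ih1 ih2 => exact ih1.trans ih2

lemma OSet_zero : OSet ω 0 = ∅ := by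
  unfold OSet
  rw [Finset.filter_false_of_mem]
  intro D _
  simp

lemma mem_OSet_bmin {B : Finset ℕ} (hB : B ∈ ω.parts) : B ∈ OSet ω (bmin B) := by
  have hne := ω.nonempty_of_mem_parts hB
  have hmem := bmin_mem hne
  have h1 := (mem_Icc_of_mem_parts hB hmem).1
  refine Finset.mem_filter.2 ⟨hB, ?_⟩
  have : B ∩ Finset.Icc 1 (bmin B) = {bmin B} := by
    ext x
    simp only [Finset.mem_inter, Finset.mem_Icc, Finset.mem_singleton]
    constructor
    · rintro ⟨hxB, _, hx2⟩
      have := bmin_le hne hxB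
      omega
    · rintro rfl
      exact ⟨hmem, h1, le_refl _⟩
  rw [this, Finset.card_singleton]

lemma not_mem_OSet_bmin {B C : Finset ℕ} (hB : B ∈ ω.parts) (hC : C ∈ ω.parts)
    (h : bmin B < bmin C) : C ∉ OSet ω (bmin B) := by
  intro hmem
  have hCne := ω.nonempty_of_mem_parts hC
  have : C ∩ Finset.Icc 1 (bmin B) = ∅ := by
    ext x
    simp only [Finset.mem_inter, Finset.mem_Icc, Finset.notMem_empty, iff_false]
    rintro ⟨hxC, _, hx2⟩
    have := bmin_le hCne hxC
    omega
  rw [OSet, Finset.mem_filter, this] at hmem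
  simp at hmem

/-- lower bound on the number of classes -/
lemma card_CT_ge (hss : SpecialSymmetric ω) : ω.parts.card + 1 ≤ (CT ω).card := by
  classical
  set M : Finset ℕ := insert 0 (ω.parts.image bmin) with hM
  have hMsub : M ⊆ Finset.range (2 * k + 1) := by
    intro x hx
    rw [hM, Finset.mem_insert] at hx
    rcases hx with rfl | hx
    · simp
    · obtain ⟨B, hB, rfl⟩ := Finset.mem_image.1 hx
      rw [Finset.mem_range, Nat.lt_succ_iff]
      exact (bmin_parity_block hB).2
  have hInj : Set.InjOn (cls ω) M := by
    intro u hu v hv huv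
    by_contra hne
    have hu2k : u ≤ 2 * k := by
      have := hMsub hu; rw [Finset.mem_range, Nat.lt_succ_iff] at this; exact this
    have hrel : Rel ω u v := rel_of_cls_eq hu2k huv
    have hOS : OSet ω u = OSet ω v := rel_OSet hss hrel
    rw [hM, Finset.coe_insert, Set.mem_insert_iff] at hu hv
    rcases hu with rfl | hu <;> rcases hv with rfl | hv
    · exact hne rfl
    · obtain ⟨C, hC, rfl⟩ := Finset.mem_coe.1 (by exact_mod_cast hv) |> Finset.mem_image.1
      have := mem_OSet_bmin hC
      rw [← hOS, OSet_zero] at this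
      simp at this
    · obtain ⟨C, hC, rfl⟩ := Finset.mem_coe.1 (by exact_mod_cast hu) |> Finset.mem_image.1
      have := mem_OSet_bmin hC
      rw [hOS, OSet_zero] at this
      simp at this
    · obtain ⟨B, hB, rfl⟩ := Finset.mem_coe.1 (by exact_mod_cast hu) |> Finset.mem_image.1
      obtain ⟨C, hC, rfl⟩ := Finset.mem_coe.1 (by exact_mod_cast hv) |> Finset.mem_image.1
      rcases lt_trichotomy (bmin B) (bmin C) with hlt | heq | hlt
      · exact not_mem_OSet_bmin hB hC hlt (hOS ▸ mem_OSet_bmin hC)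
      · exact hne heq
      · exact not_mem_OSet_bmin hC hB hlt (hOS.symm ▸ mem_OSet_bmin hB)
  have hbminInj : Set.InjOn bmin ω.parts := by
    intro B hB C hC h
    have hBne := ω.nonempty_of_mem_parts hB
    have hCne := ω.nonempty_of_mem_parts hC
    exact ω.eq_of_mem_parts hB hC (bmin_mem hBne) (h ▸ bmin_mem hCne)
  have hMcard : M.card = ω.parts.card + 1 := by
    rw [hM, Finset.card_insert_of_notMem, Finset.card_image_of_injOn hbminInj]
    intro h
    obtain ⟨B, hB, hb⟩ := Finset.mem_image.1 h
    have := (bmin_parity_block hB).1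
    omega
  calc ω.parts.card + 1 = M.card := hMcard.symm
    _ = (M.image (cls ω)).card := (Finset.card_image_of_injOn hInj).symm
    _ ≤ (CT ω).card := Finset.card_le_card (Finset.image_subset_image hMsub)

variable {k : ℕ} {ω : Finpartition (Finset.Icc 1 (2 * k))}

lemma Icc_succ (a b : ℕ) (h : a ≤ b + 1) :
    Finset.Icc a (b + 1) = insert (b + 1) (Finset.Icc a b) := by
  ext x
  simp only [Finset.mem_Icc, Finset.mem_insert]
  omega

/-- vertex classes at E/O vertices are constant along a block -/
lemma cls_Ev_const {B : Finset ℕ} (hB : B ∈ ω.parts) {i j : ℕ} (hi : i ∈ B) (hj : j ∈ B) :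
    cls ω (Ev i) = cls ω (Ev j) :=
  cls_eq_of_rel (Relation.EqvGen.rel _ _ ⟨B, hB, i, hi, j, hj, Or.inl ⟨rfl, rfl⟩⟩)

lemma cls_Ov_const {B : Finset ℕ} (hB : B ∈ ω.parts) {i j : ℕ} (hi : i ∈ B) (hj : j ∈ B) :
    cls ω (Ov i) = cls ω (Ov j) :=
  cls_eq_of_rel (Relation.EqvGen.rel _ _ ⟨B, hB, i, hi, j, hj, Or.inr ⟨rfl, rfl⟩⟩)

/-- handshake: the two boundary vertices of the walk are equivalent -/
lemma rel_zero_two_k (hEP : ∀ B ∈ ω.parts, Even B.card) : Rel ω 0 (2 * k) := by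
  classical
  set C := cls ω 0 with hC
  set ind : ℕ → ℕ := fun x => if cls ω x = C then 1 else 0 with hind
  have hind01 : ∀ x, ind x = 0 ∨ ind x = 1 := by
    intro x; simp only [hind]; split <;> simp
  have hand1 : ∀ m, (∑ i ∈ Finset.Icc 1 m, (ind (i - 1) + ind i)) % 2
      = (ind 0 + ind m) % 2 := by
    intro m
    induction m with
    | zero =>
      have := hind01 0
      simp only [Finset.Icc_self, Finset.Icc_eq_empty_of_lt (by omega : (1:ℕ) > 0)]
      rw [Finset.sum_empty]
      omega
    | succ m ih =>
      rw [Icc_succ 1 m (by omega), Finset.sum_insert (by simp)]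
      have h1 := hind01 0
      have h2 := hind01 m
      have h3 := hind01 (m + 1)
      simp only [Nat.add_sub_cancel]
      omega
  have hand2 : (∑ i ∈ Finset.Icc 1 (2 * k), (ind (i - 1) + ind i)) % 2 = 0 := by
    have hpt : ∀ i ∈ Finset.Icc 1 (2 * k), ind (i - 1) + ind i = ind (Ev i) + ind (Ov i) := by
      intro i hi
      rw [Finset.mem_Icc] at hi
      rcases Nat.even_or_odd i with h | h
      · have h' : i % 2 = 0 := by rcases h with ⟨c, hc⟩; omega
        rw [Ev_of_even i h', Ov_of_even i h']
        omega
      · have h' : i % 2 = 1 := by rw [Nat.odd_iff] at h; exact h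
        rw [Ev_of_odd i h', Ov_of_odd i h']
    rw [Finset.sum_congr rfl hpt]
    have hbi : ω.parts.biUnion id = Finset.Icc 1 (2 * k) := ω.biUnion_parts
    rw [← hbi, Finset.sum_biUnion ω.disjoint]
    rw [Finset.sum_nat_mod]
    have hz : ∀ B ∈ ω.parts, (∑ i ∈ id B, (ind (Ev i) + ind (Ov i))) % 2 = 0 := by
      intro B hB
      rcases Finset.eq_empty_or_nonempty B with rfl | hne
      · simp
      have hconst : ∀ i ∈ B, ind (Ev i) + ind (Ov i)
          = ind (Ev (bmin B)) + ind (Ov (bmin B)) := by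
        intro i hi
        simp only [hind]
        rw [cls_Ev_const hB hi (bmin_mem hne), cls_Ov_const hB hi (bmin_mem hne)]
      rw [Finset.sum_congr rfl (by exact hconst)]
      rw [Finset.sum_const, smul_eq_mul]
      obtain ⟨c, hc⟩ := hEP B hB
      simp only [id] at *
      rw [hc]
      have : (c + c) * (ind (Ev (bmin B)) + ind (Ov (bmin B)))
          = 2 * (c * (ind (Ev (bmin B)) + ind (Ov (bmin B)))) := by ring
      omega
    rw [Finset.sum_congr rfl hz]
    simp
  have hfinal := hand1 (2 * k)
  have h0 : ind 0 = 1 := by simp only [hind]; simp [hC]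
  have h2k := hind01 (2 * k)
  have hcls : cls ω (2 * k) = cls ω 0 := by
    by_contra h
    have hz : ind (2 * k) = 0 := by
      simp only [hind, hC]
      rw [if_neg h]
    omega
  exact rel_symm (rel_of_cls_eq (le_refl _) hcls)

variable {k : ℕ} {ω : Finpartition (Finset.Icc 1 (2 * k))}

noncomputable def pairf (ω : Finpartition (Finset.Icc 1 (2 * k))) (x : ℕ) :
    Finset ℕ × Finset ℕ := (cls ω (Ev x), cls ω (Ov x))

lemma pairf_const {B : Finset ℕ} (hB : B ∈ ω.parts) {i j : ℕ} (hi : i ∈ B) (hj : j ∈ B) :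
    pairf ω i = pairf ω j := by
  unfold pairf
  rw [cls_Ev_const hB hi hj, cls_Ov_const hB hi hj]

/-- walk counting: classes seen ≤ distinct entry pairs + 1 -/
lemma walk_count : ∀ i, i ≤ 2 * k →
    ((Finset.range (i + 1)).image (cls ω)).card
      ≤ ((Finset.Icc 1 i).image (pairf ω)).card + 1 := by
  intro i
  induction i with
  | zero => simp
  | succ i IH =>
    intro hi
    have IH' := IH (by omega)
    rw [Finset.range_add_one, Finset.image_insert, Icc_succ 1 i (by omega), Finset.image_insert]
    by_cases h : cls ω (i + 1) ∈ (Finset.range (i + 1)).image (cls ω)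
    · rw [Finset.insert_eq_self.2 h]
      exact le_trans IH' (by
        have := Finset.card_le_card
          (Finset.subset_insert (pairf ω (i+1)) ((Finset.Icc 1 i).image (pairf ω)))
        omega)
    · have hnew : pairf ω (i + 1) ∉ (Finset.Icc 1 i).image (pairf ω) := by
        intro hmem
        obtain ⟨j, hj, hpf⟩ := Finset.mem_image.1 hmem
        rw [Finset.mem_Icc] at hj
        apply h
        unfold pairf at hpf
        have h1 : cls ω (Ev j) = cls ω (Ev (i + 1)) := congrArg Prod.fst hpf
        have h2 : cls ω (Ov j) = cls ω (Ov (i + 1)) := congrArg Prod.snd hpf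
        rcases Nat.even_or_odd (i + 1) with he | ho
        · have he' : (i + 1) % 2 = 0 := by rcases he with ⟨c, hc⟩; omega
          have : cls ω (i + 1) = cls ω (Ev j) := by
            rw [h1, Ev_of_even _ he']
          rw [this]
          exact Finset.mem_image.2 ⟨Ev j, Finset.mem_range.2 (by have := Ev_le j; omega), rfl⟩
        · have ho' : (i + 1) % 2 = 1 := by rw [Nat.odd_iff] at ho; exact ho
          have : cls ω (i + 1) = cls ω (Ov j) := by
            rw [h2, Ov_of_odd _ ho']
          rw [this]
          exact Finset.mem_image.2 ⟨Ov j, Finset.mem_range.2 (by have := Ov_le j; omega), rfl⟩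
      rw [Finset.card_insert_of_notMem h, Finset.card_insert_of_notMem hnew]
      omega

lemma CT_def' : CT ω = (Finset.range (2 * k + 1)).image (cls ω) := rfl

lemma pair_image_eq :
    (Finset.Icc 1 (2 * k)).image (pairf ω)
      = ω.parts.image (fun B => pairf ω (bmin B)) := by
  ext x
  simp only [Finset.mem_image]
  constructor
  · rintro ⟨i, hi, rfl⟩
    rw [Finset.mem_Icc] at hi
    obtain ⟨B, hB, hiB⟩ := exists_block hi.1 hi.2
    have hne := ω.nonempty_of_mem_parts hB
    exact ⟨B, hB, (pairf_const hB (bmin_mem hne) hiB)⟩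
  · rintro ⟨B, hB, rfl⟩
    have hne := ω.nonempty_of_mem_parts hB
    have := mem_Icc_of_mem_parts hB (bmin_mem hne)
    exact ⟨bmin B, Finset.mem_Icc.2 this, rfl⟩

/-- for special symmetric words, the entry pair classes determine the block -/
lemma pairB_inj (hss : SpecialSymmetric ω) {B C : Finset ℕ} (hB : B ∈ ω.parts)
    (hC : C ∈ ω.parts) (h : pairf ω (bmin B) = pairf ω (bmin C)) : B = C := by
  by_contra hne
  have hsub : ω.parts.image (fun D => pairf ω (bmin D))
      ⊆ (ω.parts.erase C).image (fun D => pairf ω (bmin D)) := by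
    intro x hx
    obtain ⟨D, hD, rfl⟩ := Finset.mem_image.1 hx
    by_cases hDC : D = C
    · subst hDC
      exact Finset.mem_image.2 ⟨B, Finset.mem_erase.2 ⟨hne, hB⟩, h⟩
    · exact Finset.mem_image.2 ⟨D, Finset.mem_erase.2 ⟨hDC, hD⟩, rfl⟩
  have hb1 : 1 ≤ ω.parts.card := Finset.card_pos.2 ⟨B, hB⟩
  have hchain : ω.parts.card + 1 ≤ ω.parts.card - 1 + 1 := by
    calc ω.parts.card + 1 ≤ (CT ω).card := card_CT_ge hss
      _ ≤ ((Finset.Icc 1 (2 * k)).image (pairf ω)).card + 1 := by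
          rw [CT_def']; exact walk_count (2 * k) (le_refl _)
      _ = (ω.parts.image (fun D => pairf ω (bmin D))).card + 1 := by rw [pair_image_eq]
      _ ≤ ((ω.parts.erase C).image (fun D => pairf ω (bmin D))).card + 1 := by
          have := Finset.card_le_card hsub; omega
      _ ≤ (ω.parts.erase C).card + 1 := by
          have := Finset.card_image_le (s := ω.parts.erase C)
            (f := fun D => pairf ω (bmin D)); omega
      _ = ω.parts.card - 1 + 1 := by rw [Finset.card_erase_of_mem hC]
  omega

/-- exact class counts for special symmetric words -/
lemma card_CE_CO_eq (hss : SpecialSymmetric ω) :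
    (CE ω).card = rIdx ω + 1 ∧ (CO ω).card = ω.parts.card - rIdx ω := by
  have h1 := card_CE_le (ω := ω)
  have h2 := card_CO_le (ω := ω)
  have h3 := card_CT_ge hss
  have h4 := card_CT (ω := ω)
  have h5 := rIdx_le (ω := ω)
  omega

variable {p' n' k : ℕ} {ω : Finpartition (Finset.Icc 1 (2 * k))}

lemma pi_const {π : ℕ → ℤ} (hπ : π ∈ PiS p' n' k ω) {u v : ℕ} (h : Rel ω u v) :
    π u = π v := by
  induction h with
  | rel u v h =>
    obtain ⟨B, hB, i, hi, j, hj, hc⟩ := h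
    have hiI : i ∈ Finset.Icc 1 (2 * k) := ω.le hB hi
    have hjI : j ∈ Finset.Icc 1 (2 * k) := ω.le hB hj
    have hent : entryIdx π i = entryIdx π j := (hπ.2 i hiI j hjI).1 ⟨B, hB, hi, hj⟩
    rw [entryIdx_eq, entryIdx_eq] at hent
    have h1 := congrArg Prod.fst hent
    have h2 := congrArg Prod.snd hent
    simp only at h1 h2
    rcases hc with ⟨rfl, rfl⟩ | ⟨rfl, rfl⟩
    · exact h1
    · exact h2
  | refl u => rfl
  | symm u v _ ih => exact ih.symm
  | trans u v w _ _ ih1 ih2 => exact ih1.trans ih2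

lemma circ_even_range {π : ℕ → ℤ} (hc : IsCircuit p' n' k π) {u : ℕ} (hu : u ≤ 2 * k)
    (he : u % 2 = 0) : π u ∈ Finset.Icc (1 : ℤ) (p' : ℤ) := by
  obtain ⟨c, rfl⟩ : ∃ c, u = 2 * c := ⟨u / 2, by omega⟩
  rw [Finset.mem_Icc]
  exact hc.2.1 c (by omega)

lemma circ_odd_range {π : ℕ → ℤ} (hc : IsCircuit p' n' k π) {u : ℕ} (hu : u ≤ 2 * k)
    (ho : u % 2 = 1) : π u ∈ Finset.Icc (1 : ℤ) (n' : ℤ) := by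
  obtain ⟨c, hc1, hc2, rfl⟩ : ∃ c, 1 ≤ c ∧ c ≤ k ∧ u = 2 * c - 1 :=
    ⟨(u + 1) / 2, by omega, by omega, by omega⟩
  rw [Finset.mem_Icc]
  exact hc.2.2.1 c hc1 hc2

lemma mem_CE_of {u : ℕ} (hu : u ≤ 2 * k) (he : u % 2 = 0) : cls ω u ∈ CE ω :=
  mem_CE.2 ⟨u, hu, he, rfl⟩

lemma mem_CO_of {u : ℕ} (hu : u ≤ 2 * k) (ho : u % 2 = 1) : cls ω u ∈ CO ω :=
  mem_CO.2 ⟨u, hu, ho, rfl⟩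

/-- the coloring map used for the upper bound -/
noncomputable def upperMap (p' n' k : ℕ) (ω : Finpartition (Finset.Icc 1 (2 * k)))
    (π : ↥(PiS p' n' k ω)) :
    (↥(CE ω) → ↥(Finset.Icc (1 : ℤ) (p' : ℤ)))
      × (↥(CO ω) → ↥(Finset.Icc (1 : ℤ) (n' : ℤ))) :=
  ⟨fun C => ⟨π.1 (mem_CE.1 C.2).choose, by
      obtain ⟨h1, h2, h3⟩ := (mem_CE.1 C.2).choose_spec
      exact circ_even_range π.2.1 h1 h2⟩,
   fun C => ⟨π.1 (mem_CO.1 C.2).choose, by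
      obtain ⟨h1, h2, h3⟩ := (mem_CO.1 C.2).choose_spec
      exact circ_odd_range π.2.1 h1 h2⟩⟩

lemma upperMap_inj : Function.Injective (upperMap p' n' k ω) := by
  intro π π' h
  have h1 := congrArg Prod.fst h
  have h2 := congrArg Prod.snd h
  simp only [upperMap] at h1 h2
  apply Subtype.ext
  funext i
  by_cases hi : i ≤ 2 * k
  · rcases Nat.even_or_odd i with he | ho
    · have he' : i % 2 = 0 := by rcases he with ⟨c, hc⟩; omega
      have hCmem : cls ω i ∈ CE ω := mem_CE_of hi he'
      have hv := congrFun h1 ⟨cls ω i, hCmem⟩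
      rw [Subtype.mk.injEq] at hv
      obtain ⟨hr1, hr2, hr3⟩ := (mem_CE.1 hCmem).choose_spec
      have hrel : Rel ω i (mem_CE.1 hCmem).choose :=
        rel_of_cls_eq hi (hr3.symm ▸ rfl)
      calc π.1 i = π.1 _ := pi_const π.2 hrel
        _ = π'.1 _ := hv
        _ = π'.1 i := (pi_const π'.2 hrel).symm
    · have ho' : i % 2 = 1 := by rw [Nat.odd_iff] at ho; exact ho
      have hCmem : cls ω i ∈ CO ω := mem_CO_of hi ho'
      have hv := congrFun h2 ⟨cls ω i, hCmem⟩
      rw [Subtype.mk.injEq] at hv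
      obtain ⟨hr1, hr2, hr3⟩ := (mem_CO.1 hCmem).choose_spec
      have hrel : Rel ω i (mem_CO.1 hCmem).choose :=
        rel_of_cls_eq hi (hr3.symm ▸ rfl)
      calc π.1 i = π.1 _ := pi_const π.2 hrel
        _ = π'.1 _ := hv
        _ = π'.1 i := (pi_const π'.2 hrel).symm
  · rw [π.2.1.2.2.2 i (by omega), π'.2.1.2.2.2 i (by omega)]

instance PiS_finite : Finite ↥(PiS p' n' k ω) :=
  Finite.of_injective _ (upperMap_inj (p' := p') (n' := n') (ω := ω))

lemma card_Icc_int (m : ℕ) : Fintype.card ↥(Finset.Icc (1 : ℤ) (m : ℤ)) = m := by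
  rw [Fintype.card_coe, Int.card_Icc]
  simp

lemma ncard_PiS_le_pow :
    (PiS p' n' k ω).ncard ≤ p' ^ (CE ω).card * n' ^ (CO ω).card := by
  classical
  rw [← Nat.card_coe_set_eq]
  have h := Nat.card_le_card_of_injective _ (upperMap_inj (p' := p') (n' := n') (ω := ω))
  have htgt : Nat.card ((↥(CE ω) → ↥(Finset.Icc (1 : ℤ) (p' : ℤ)))
      × (↥(CO ω) → ↥(Finset.Icc (1 : ℤ) (n' : ℤ))))
      = p' ^ (CE ω).card * n' ^ (CO ω).card := by
    rw [Nat.card_eq_fintype_card, Fintype.card_prod, Fintype.card_fun, Fintype.card_fun,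
      card_Icc_int, card_Icc_int, Fintype.card_coe, Fintype.card_coe]
  exact htgt ▸ h

/-- Statement 3, part 1 -/
lemma ncard_PiS_le (hp' : 1 ≤ p') (hn' : 1 ≤ n') :
    (PiS p' n' k ω).ncard ≤ p' ^ (rIdx ω + 1) * n' ^ (ω.parts.card - rIdx ω) :=
  le_trans ncard_PiS_le_pow
    (Nat.mul_le_mul (Nat.pow_le_pow_right hp' card_CE_le)
      (Nat.pow_le_pow_right hn' card_CO_le))

variable {p n k : ℕ} {ω : Finpartition (Finset.Icc 1 (2 * k))}

/-- reconstruction of a circuit from a coloring of the classes -/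
noncomputable def recon (p n k : ℕ) (ω : Finpartition (Finset.Icc 1 (2 * k)))
    (f : ↥(CE ω) ↪ ↥(Finset.Icc (1 : ℤ) (p : ℤ)))
    (g : ↥(CO ω) ↪ ↥(Finset.Icc (1 : ℤ) (n : ℤ))) : ℕ → ℤ := fun i =>
  if hi : i ≤ 2 * k then
    if he : i % 2 = 0 then (f ⟨cls ω i, mem_CE_of hi he⟩ : ℤ)
    else (g ⟨cls ω i, mem_CO_of hi (by omega)⟩ : ℤ)
  else 0

variable {f : ↥(CE ω) ↪ ↥(Finset.Icc (1 : ℤ) (p : ℤ))}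
  {g : ↥(CO ω) ↪ ↥(Finset.Icc (1 : ℤ) (n : ℤ))}

lemma recon_even {i : ℕ} (hi : i ≤ 2 * k) (he : i % 2 = 0) :
    recon p n k ω f g i = (f ⟨cls ω i, mem_CE_of hi he⟩ : ℤ) := by
  simp only [recon]
  rw [dif_pos hi, dif_pos he]

lemma recon_odd {i : ℕ} (hi : i ≤ 2 * k) (ho : i % 2 = 1) :
    recon p n k ω f g i = (g ⟨cls ω i, mem_CO_of hi ho⟩ : ℤ) := by
  simp only [recon]
  rw [dif_pos hi, dif_neg (by omega)]

lemma recon_cls_even {u v : ℕ} (hu : u ≤ 2 * k) (hv : v ≤ 2 * k) (heu : u % 2 = 0)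
    (hev : v % 2 = 0) (h : cls ω u = cls ω v) :
    recon p n k ω f g u = recon p n k ω f g v := by
  rw [recon_even hu heu, recon_even hv hev]
  congr 1
  exact congrArg f (Subtype.ext h)

lemma recon_cls_odd {u v : ℕ} (hu : u ≤ 2 * k) (hv : v ≤ 2 * k) (heu : u % 2 = 1)
    (hev : v % 2 = 1) (h : cls ω u = cls ω v) :
    recon p n k ω f g u = recon p n k ω f g v := by
  rw [recon_odd hu heu, recon_odd hv hev]
  congr 1
  exact congrArg g (Subtype.ext h)

lemma recon_mem_PiS (hss : SpecialSymmetric ω) :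
    recon p n k ω f g ∈ PiS p n k ω := by
  have hk0 : (0 : ℕ) % 2 = 0 := rfl
  have h2k : (2 * k) % 2 = 0 := by omega
  constructor
  · -- circuit conditions
    refine ⟨?_, ?_, ?_, ?_⟩
    · exact recon_cls_even (by omega) (le_refl _) hk0 h2k
        (cls_eq_of_rel (rel_zero_two_k hss.1))
    · intro i hi
      rw [recon_even (by omega) (by omega)]
      have := (f ⟨cls ω (2 * i), mem_CE_of (by omega) (by omega)⟩).2
      rw [Finset.mem_Icc] at this
      exact this
    · intro i hi1 hi2
      rw [recon_odd (by omega) (by omega)]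
      have := (g ⟨cls ω (2 * i - 1), mem_CO_of (by omega) (by omega)⟩).2
      rw [Finset.mem_Icc] at this
      exact this
    · intro i hi
      simp only [recon]
      rw [dif_neg (by omega)]
  · -- the matching条件
    intro i hiI j hjI
    rw [Finset.mem_Icc] at hiI hjI
    constructor
    · rintro ⟨B, hB, hiB, hjB⟩
      rw [entryIdx_eq, entryIdx_eq]
      have hEv : cls ω (Ev i) = cls ω (Ev j) := cls_Ev_const hB hiB hjB
      have hOv : cls ω (Ov i) = cls ω (Ov j) := cls_Ov_const hB hiB hjB
      have h1 : recon p n k ω f g (Ev i) = recon p n k ω f g (Ev j) :=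
        recon_cls_even (le_trans (Ev_le i) hiI.2) (le_trans (Ev_le j) hjI.2)
          (Ev_mod i hiI.1) (Ev_mod j hjI.1) hEv
      have h2 : recon p n k ω f g (Ov i) = recon p n k ω f g (Ov j) :=
        recon_cls_odd (le_trans (Ov_le i) hiI.2) (le_trans (Ov_le j) hjI.2)
          (Ov_mod i hiI.1) (Ov_mod j hjI.1) hOv
      rw [h1, h2]
    · intro hent
      rw [entryIdx_eq, entryIdx_eq] at hent
      have h1 : recon p n k ω f g (Ev i) = recon p n k ω f g (Ev j) :=
        congrArg Prod.fst hent
      have h2 : recon p n k ω f g (Ov i) = recon p n k ω f g (Ov j) :=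
        congrArg Prod.snd hent
      rw [recon_even (le_trans (Ev_le i) hiI.2) (Ev_mod i hiI.1),
        recon_even (le_trans (Ev_le j) hjI.2) (Ev_mod j hjI.1)] at h1
      rw [recon_odd (le_trans (Ov_le i) hiI.2) (Ov_mod i hiI.1),
        recon_odd (le_trans (Ov_le j) hjI.2) (Ov_mod j hjI.1)] at h2
      have hEv : cls ω (Ev i) = cls ω (Ev j) := by
        have := f.injective (Subtype.ext h1)
        exact congrArg Subtype.val this
      have hOv : cls ω (Ov i) = cls ω (Ov j) := by
        have := g.injective (Subtype.ext h2)
        exact congrArg Subtype.val this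
      obtain ⟨B, hB, hiB⟩ := exists_block hiI.1 hiI.2
      obtain ⟨C, hC, hjC⟩ := exists_block hjI.1 hjI.2
      have hBne := ω.nonempty_of_mem_parts hB
      have hCne := ω.nonempty_of_mem_parts hC
      have hpf : pairf ω (bmin B) = pairf ω (bmin C) := by
        calc pairf ω (bmin B) = pairf ω i := pairf_const hB (bmin_mem hBne) hiB
          _ = pairf ω j := by unfold pairf; rw [hEv, hOv]
          _ = pairf ω (bmin C) := pairf_const hC hjC (bmin_mem hCne)
      have hBC := pairB_inj hss hB hC hpf
      exact ⟨B, hB, hiB, hBC ▸ hjC⟩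

lemma recon_inj (hss : SpecialSymmetric ω) :
    Function.Injective (fun fg : (↥(CE ω) ↪ ↥(Finset.Icc (1 : ℤ) (p : ℤ)))
        × (↥(CO ω) ↪ ↥(Finset.Icc (1 : ℤ) (n : ℤ))) =>
      (⟨recon p n k ω fg.1 fg.2, recon_mem_PiS hss⟩ : ↥(PiS p n k ω))) := by
  rintro ⟨f, g⟩ ⟨f', g'⟩ h
  rw [Subtype.mk.injEq] at h
  have hfun : ∀ i, recon p n k ω f g i = recon p n k ω f' g' i := fun i => congrFun h i
  ext C
  case fst =>
    obtain ⟨i, hi, he, hcls⟩ := mem_CE.1 C.2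
    have h1 := hfun i
    rw [recon_even hi he, recon_even hi he] at h1
    have : (⟨cls ω i, mem_CE_of hi he⟩ : ↥(CE ω)) = C := Subtype.ext hcls
    rw [this] at h1
    exact h1
  case snd =>
    obtain ⟨i, hi, ho, hcls⟩ := mem_CO.1 C.2
    have h1 := hfun i
    rw [recon_odd hi ho, recon_odd hi ho] at h1
    have : (⟨cls ω i, mem_CO_of hi ho⟩ : ↥(CO ω)) = C := Subtype.ext hcls
    rw [this] at h1
    exact h1

lemma ncard_PiS_ge (hss : SpecialSymmetric ω) :
    p.descFactorial (CE ω).card * n.descFactorial (CO ω).card ≤ (PiS p n k ω).ncard := by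
  classical
  rw [← Nat.card_coe_set_eq]
  have h := Nat.card_le_card_of_injective _ (recon_inj (p := p) (n := n) (ω := ω) hss)
  have hsrc : Nat.card ((↥(CE ω) ↪ ↥(Finset.Icc (1 : ℤ) (p : ℤ)))
      × (↥(CO ω) ↪ ↥(Finset.Icc (1 : ℤ) (n : ℤ))))
      = p.descFactorial (CE ω).card * n.descFactorial (CO ω).card := by
    rw [Nat.card_eq_fintype_card, Fintype.card_prod, Fintype.card_embedding_eq,
      Fintype.card_embedding_eq, card_Icc_int, card_Icc_int,
      Fintype.card_coe, Fintype.card_coe]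
  exact hsrc ▸ h

lemma tendsto_descFactorial_ratio (m : ℕ) {f : ℕ → ℕ} (hf : Tendsto f atTop atTop) :
    Tendsto (fun j => ((f j).descFactorial m : ℝ) / (f j : ℝ) ^ m) atTop (𝓝 1) := by
  have hlim : Tendsto (fun j => ∏ i ∈ Finset.range m, (1 - (i : ℝ) / (f j))) atTop (𝓝 1) := by
    have hfac : ∀ i ∈ Finset.range m,
        Tendsto (fun j => 1 - (i : ℝ) / (f j)) atTop (𝓝 1) := by
      intro i _
      have h0 : Tendsto (fun j => (i : ℝ) / (f j)) atTop (𝓝 0) :=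
        Tendsto.div_atTop tendsto_const_nhds (tendsto_natCast_atTop_iff.2 hf)
      simpa using tendsto_const_nhds.sub h0
    have := tendsto_finset_prod (Finset.range m) hfac
    simpa using this
  apply hlim.congr'
  filter_upwards [hf.eventually_ge_atTop (m + 1)] with j hj
  have hfj : (0 : ℝ) < (f j : ℝ) := by
    have : (0 : ℕ) < f j := by omega
    exact_mod_cast this
  rw [Nat.descFactorial_eq_prod_range, Nat.cast_prod]
  have hpow : ((f j : ℝ)) ^ m = ∏ _i ∈ Finset.range m, (f j : ℝ) := by
    rw [Finset.prod_const, Finset.card_range]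
  rw [hpow, ← Finset.prod_div_distrib]
  apply Finset.prod_congr rfl
  intro i hi
  rw [Finset.mem_range] at hi
  rw [Nat.cast_sub (by omega), sub_div, div_self (ne_of_gt hfj)]

lemma p_tendsto_atTop {pf : ℕ → ℕ} {y : ℝ} (hy : 0 < y)
    (hp : Tendsto (fun n : ℕ => (pf n : ℝ) / n) atTop (𝓝 y)) :
    Tendsto pf atTop atTop := by
  rw [← tendsto_natCast_atTop_iff (R := ℝ)]
  have h := Tendsto.pos_mul_atTop hy hp tendsto_natCast_atTop_atTop
  apply h.congr'
  filter_upwards [eventually_ge_atTop 1] with n hn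
  have hn0 : (n : ℝ) ≠ 0 := by
    have : (0:ℕ) < n := hn
    have : (0:ℝ) < (n:ℝ) := by exact_mod_cast this
    exact ne_of_gt this
  field_simp

/-- For a partition `ω` of `{1,…,2k}` with `b` blocks and `r(ω) = r`,
one has `|Π_S(ω)| ≤ p^{r+1}·n^{b−r}` for all positive `p, n`; if moreover `ω` is
special symmetric and `p(n)/n → y ∈ (0,∞)`, then `|Π_S(ω)|/(p^{r+1}·n^{b−r}) → 1`. -/
theorem statement3 (k b r : ℕ) (hk : 1 ≤ k) (hb : 1 ≤ b)
    (ω : Finpartition (Finset.Icc 1 (2 * k)))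
    (hωb : ω.parts.card = b) (hωr : rIdx ω = r) :
    (∀ p' n' : ℕ, 1 ≤ p' → 1 ≤ n' →
      (PiS p' n' k ω).ncard ≤ p' ^ (r + 1) * n' ^ (b - r)) ∧
    (∀ (p : ℕ → ℕ) (y : ℝ), 0 < y →
      Tendsto (fun n : ℕ => (p n : ℝ) / n) atTop (𝓝 y) →
      SpecialSymmetric ω →
      Tendsto (fun n : ℕ =>
          ((PiS (p n) n k ω).ncard : ℝ) / ((p n : ℝ) ^ (r + 1) * (n : ℝ) ^ (b - r)))
        atTop (𝓝 1)) := by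
  constructor
  · intro p' n' hp' hn'
    rw [← hωb, ← hωr]
    exact ncard_PiS_le hp' hn'
  · intro p y hy hp hss
    obtain ⟨hCE, hCO⟩ := card_CE_CO_eq hss
    rw [hωr] at hCE
    rw [hωb, hωr] at hCO
    have hpt : Tendsto p atTop atTop := p_tendsto_atTop hy hp
    have hL : ∀ m : ℕ, (p m).descFactorial (r + 1) * m.descFactorial (b - r)
        ≤ (PiS (p m) m k ω).ncard := by
      intro m
      have := ncard_PiS_ge (p := p m) (n := m) hss
      rwa [hCE, hCO] at this
    have hU : ∀ m : ℕ, 1 ≤ p m → 1 ≤ m →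
        (PiS (p m) m k ω).ncard ≤ (p m) ^ (r + 1) * m ^ (b - r) := by
      intro m h1 h2
      have := ncard_PiS_le (ω := ω) h1 h2
      rwa [hωb, hωr] at this
    have hlow : Tendsto (fun m => ((p m).descFactorial (r + 1) : ℝ) / (p m : ℝ) ^ (r + 1)
        * ((m.descFactorial (b - r) : ℝ) / (m : ℝ) ^ (b - r))) atTop (𝓝 1) := by
      have h1 := tendsto_descFactorial_ratio (r + 1) hpt
      have h2 := tendsto_descFactorial_ratio (b - r) (tendsto_id (α := ℕ))
      simpa using h1.mul h2
    apply tendsto_of_tendsto_of_tendsto_of_le_of_le' hlow tendsto_const_nhds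
    · filter_upwards [hpt.eventually_ge_atTop 1, eventually_ge_atTop 1] with m h1 h2
      have hppos : (0 : ℝ) < (p m : ℝ) := by exact_mod_cast (by omega : 0 < p m)
      have hmpos : (0 : ℝ) < (m : ℝ) := by exact_mod_cast (by omega : 0 < m)
      have hUpos : (0 : ℝ) < (p m : ℝ) ^ (r + 1) * (m : ℝ) ^ (b - r) := by positivity
      rw [div_mul_div_comm]
      have hnum : ((p m).descFactorial (r + 1) : ℝ) * (m.descFactorial (b - r) : ℝ)
          ≤ ((PiS (p m) m k ω).ncard : ℝ) := by
        have h' : (((p m).descFactorial (r + 1) * m.descFactorial (b - r) : ℕ) : ℝ)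
            ≤ (((PiS (p m) m k ω).ncard : ℕ) : ℝ) := Nat.cast_le.mpr (hL m)
        push_cast at h'
        exact h'
      exact (div_le_div_iff_of_pos_right hUpos).2 hnum
    · filter_upwards [hpt.eventually_ge_atTop 1, eventually_ge_atTop 1] with m h1 h2
      have hppos : (0 : ℝ) < (p m : ℝ) := by exact_mod_cast (by omega : 0 < p m)
      have hmpos : (0 : ℝ) < (m : ℝ) := by exact_mod_cast (by omega : 0 < m)
      have hUpos : (0 : ℝ) < (p m : ℝ) ^ (r + 1) * (m : ℝ) ^ (b - r) := by positivity
      rw [div_le_one hUpos]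
      have h' : (((PiS (p m) m k ω).ncard : ℕ) : ℝ)
          ≤ (((p m) ^ (r + 1) * m ^ (b - r) : ℕ) : ℝ) := Nat.cast_le.mpr (hU m h1 h2)
      push_cast at h'
      exact h'


end RMT
end

section
/- Let p = p(n) with p/n → y ∈ (0,∞) as n → ∞. For every set partition ω of {1,…,2k} with b blocks and r(ω) = r: lim_{n→∞} |Π_S(ω)| / n^{b+1} = y^{r+1} if ω ∈ SS_b(2k), and lim_{n→∞} |Π_S(ω)| / n^{b+1} = 0 if ω ∉ SS_b(2k). Consequently lim_{n→∞} |Π_S(ω)| / (p^{r+1}·n^{b−r}) = 1 if and only if ω is special symmetric. -/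
open MeasureTheory Filter Finset ProbabilityTheory Matrix
open scoped ENNReal NNReal Topology

namespace RMT

namespace W
open scoped Classical

/-- min of the block of `i` (junk if `i` outside). -/
def mB (k : ℕ) (ω : Finpartition (Finset.Icc 1 (2 * k))) (i : ℕ) : ℕ :=
  WithBot.unbotD 0 (ω.part i).min

/-- same-parity endpoint of the block-min edge. -/
def sg (k : ℕ) (ω : Finpartition (Finset.Icc 1 (2 * k))) (i : ℕ) : ℕ :=
  if Even (i + mB k ω i) then mB k ω i else mB k ω i - 1

/-- opposite-parity endpoint. -/
def tg (k : ℕ) (ω : Finpartition (Finset.Icc 1 (2 * k))) (i : ℕ) : ℕ :=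
  if Even (i + mB k ω i) then mB k ω i - 1 else mB k ω i

variable (k : ℕ) (ω : Finpartition (Finset.Icc 1 (2 * k)))

lemma mB_mem {i : ℕ} (hi : i ∈ Finset.Icc 1 (2 * k)) : mB k ω i ∈ ω.part i := by
  have hne : (ω.part i).Nonempty := ⟨i, ω.mem_part hi⟩
  obtain ⟨a, ha⟩ := Finset.min_of_nonempty hne
  have := Finset.mem_of_min ha
  rw [mB, ha]; exact this

lemma mB_min {i j : ℕ} (hi : i ∈ Finset.Icc 1 (2 * k)) (hj : j ∈ ω.part i) :
    mB k ω i ≤ j := by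
  have hne : (ω.part i).Nonempty := ⟨i, ω.mem_part hi⟩
  obtain ⟨a, ha⟩ := Finset.min_of_nonempty hne
  have := Finset.min_le_of_eq hj ha
  rw [mB, ha]; exact this

lemma mB_le {i : ℕ} (hi : i ∈ Finset.Icc 1 (2 * k)) : mB k ω i ≤ i :=
  mB_min k ω hi (ω.mem_part hi)

lemma mB_mem_s {i : ℕ} (hi : i ∈ Finset.Icc 1 (2 * k)) :
    mB k ω i ∈ Finset.Icc 1 (2 * k) :=
  ω.le ((ω.part_mem.mpr hi)) (mB_mem k ω hi)

lemma part_eq_of_mem_part {i j : ℕ} (hi : i ∈ Finset.Icc 1 (2 * k))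
    (hj : j ∈ ω.part i) : ω.part j = ω.part i :=
  ω.part_eq_of_mem ((ω.part_mem.mpr hi)) hj

lemma mB_part_eq {i j : ℕ} (hi : i ∈ Finset.Icc 1 (2 * k))
    (hj : j ∈ Finset.Icc 1 (2 * k)) (h : ω.part i = ω.part j) :
    mB k ω i = mB k ω j := by
  unfold mB; rw [h]

lemma mB_self {i : ℕ} (hi : i ∈ Finset.Icc 1 (2 * k)) :
    mB k ω (mB k ω i) = mB k ω i := by
  have h : ω.part (WithBot.unbotD 0 (ω.part i).min) = ω.part i :=
    part_eq_of_mem_part k ω hi (mB_mem k ω hi)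
  simp only [mB, h]

lemma sg_lt {i : ℕ} (hi : i ∈ Finset.Icc 1 (2 * k)) (hne : mB k ω i ≠ i) :
    sg k ω i < i := by
  have h1 := mB_le k ω hi
  have : mB k ω i < i := lt_of_le_of_ne h1 hne
  unfold sg; split <;> omega

/-- the canonical label of a position. -/
def lam (k : ℕ) (ω : Finpartition (Finset.Icc 1 (2 * k))) : ℕ → ℕ
  | i =>
    if h : i ∈ Finset.Icc 1 (2 * k) then
      if h2 : mB k ω i = i then i else lam k ω (sg k ω i)
    else 0
  termination_by i => i
  decreasing_by exact sg_lt k ω h h2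

lemma lam_zero : lam k ω 0 = 0 := by
  rw [lam]; simp

lemma lam_not_mem {i : ℕ} (hi : i ∉ Finset.Icc 1 (2 * k)) : lam k ω i = 0 := by
  rw [lam]; simp [hi]

lemma lam_min {i : ℕ} (hi : i ∈ Finset.Icc 1 (2 * k)) (h : mB k ω i = i) :
    lam k ω i = i := by
  rw [lam]; simp [hi, h]

lemma lam_rec {i : ℕ} (hi : i ∈ Finset.Icc 1 (2 * k)) (h : mB k ω i ≠ i) :
    lam k ω i = lam k ω (sg k ω i) := by
  conv_lhs => rw [lam]
  simp [hi, h]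

lemma lam_le (i : ℕ) : lam k ω i ≤ i := by
  induction i using Nat.strong_induction_on with
  | _ i ih =>
    by_cases hi : i ∈ Finset.Icc 1 (2 * k)
    · by_cases h2 : mB k ω i = i
      · rw [lam_min k ω hi h2]
      · rw [lam_rec k ω hi h2]
        exact le_trans (ih _ (sg_lt k ω hi h2)) (le_of_lt (sg_lt k ω hi h2))
    · rw [lam_not_mem k ω hi]; omega


lemma lam_parity {i : ℕ} (hi : i ≤ 2 * k) : Even (lam k ω i) ↔ Even i := by
  induction i using Nat.strong_induction_on with
  | _ i ih =>
    by_cases hs : i ∈ Finset.Icc 1 (2 * k)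
    · by_cases h2 : mB k ω i = i
      · rw [lam_min k ω hs h2]
      · rw [lam_rec k ω hs h2]
        have hlt := sg_lt k ω hs h2
        have hsg : sg k ω i ≤ 2 * k := le_trans (le_of_lt hlt) hi
        rw [ih _ hlt hsg]
        have hm1 : 1 ≤ mB k ω i := by
          have := mB_mem_s k ω hs
          rw [Finset.mem_Icc] at this; omega
        unfold sg
        by_cases he : Even (i + mB k ω i)
        · simp only [he, if_true]
          simp only [Nat.even_iff] at he ⊢
          omega
        · simp only [he, if_false]
          simp only [Nat.even_iff, Nat.not_even_iff] at he ⊢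
          omega
    · rw [lam_not_mem k ω hs]
      rw [Finset.mem_Icc] at hs
      have : i = 0 := by omega
      simp [this]

/-- a "vertex": 0 or a block minimum. -/
def Vtx (k : ℕ) (ω : Finpartition (Finset.Icc 1 (2 * k))) (u : ℕ) : Prop :=
  u = 0 ∨ (u ∈ Finset.Icc 1 (2 * k) ∧ mB k ω u = u)

lemma lam_vtx (i : ℕ) : Vtx k ω (lam k ω i) := by
  induction i using Nat.strong_induction_on with
  | _ i ih =>
    by_cases hs : i ∈ Finset.Icc 1 (2 * k)
    · by_cases h2 : mB k ω i = i
      · rw [lam_min k ω hs h2]; exact Or.inr ⟨hs, h2⟩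
      · rw [lam_rec k ω hs h2]; exact ih _ (sg_lt k ω hs h2)
    · rw [lam_not_mem k ω hs]; exact Or.inl rfl

/-- ancestors of a vertex. -/
def anc (k : ℕ) (ω : Finpartition (Finset.Icc 1 (2 * k))) : ℕ → Finset ℕ
  | 0 => {0}
  | (u + 1) => insert (u + 1) (anc k ω (lam k ω u))
  termination_by u => u
  decreasing_by
    have := lam_le k ω u
    omega

lemma anc_zero : anc k ω 0 = {0} := by simp only [anc]

lemma anc_succ {u : ℕ} (hu : u ≠ 0) :
    anc k ω u = insert u (anc k ω (lam k ω (u - 1))) := by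
  obtain ⟨v, rfl⟩ := Nat.exists_eq_add_of_lt (Nat.pos_of_ne_zero hu)
  simp only [Nat.zero_add] at *
  simp only [anc, Nat.add_sub_cancel]

lemma anc_le {u v : ℕ} (hv : v ∈ anc k ω u) : v ≤ u := by
  induction u using Nat.strong_induction_on with
  | _ u ih =>
    by_cases hu : u = 0
    · subst hu; rw [anc_zero] at hv; simp at hv; omega
    · rw [anc_succ k ω hu] at hv
      rcases Finset.mem_insert.mp hv with h | h
      · omega
      · have h1 := lam_le k ω (u - 1)
        have := ih (lam k ω (u - 1)) (by omega) h
        omega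

lemma mem_anc_self (u : ℕ) : u ∈ anc k ω u := by
  by_cases hu : u = 0
  · subst hu; rw [anc_zero]; simp
  · rw [anc_succ k ω hu]; exact Finset.mem_insert_self _ _

lemma not_mem_anc_of_gt {u v : ℕ} (h : v < u) : u ∉ anc k ω v :=
  fun hc => absurd (anc_le k ω hc) (by omega)

/-- min of a block. -/
def mn (C : Finset ℕ) : ℕ := WithBot.unbotD 0 C.min

lemma mn_mem {C : Finset ℕ} (hC : C ∈ ω.parts) : mn C ∈ C := by
  have hne : C.Nonempty := ω.nonempty_of_mem_parts hC
  obtain ⟨a, ha⟩ := Finset.min_of_nonempty hne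
  have := Finset.mem_of_min ha
  rw [mn, ha]; exact this

lemma mn_mem_s {C : Finset ℕ} (hC : C ∈ ω.parts) : mn C ∈ Finset.Icc 1 (2 * k) :=
  ω.le hC (mn_mem k ω hC)

lemma mB_eq_mn {C : Finset ℕ} {x : ℕ} (hC : C ∈ ω.parts) (hx : x ∈ C) :
    mB k ω x = mn C := by
  have h : ω.part x = C := ω.part_eq_of_mem hC hx
  unfold mB mn; rw [h]

lemma mem_part_iff {C : Finset ℕ} {m : ℕ} (hC : C ∈ ω.parts)
    (hm : m ∈ Finset.Icc 1 (2 * k)) : m ∈ C ↔ C = ω.part m := by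
  constructor
  · intro h; exact ω.eq_of_mem_parts hC ((ω.part_mem.mpr hm)) h (ω.mem_part hm)
  · rintro rfl; exact ω.mem_part hm

lemma mn_part {m : ℕ} : mn (ω.part m) = mB k ω m := rfl

/-- injectivity of open-block sets. -/
lemma anc_inj {u v : ℕ} (hu : Vtx k ω u) (hv : Vtx k ω v)
    (h : ∀ C ∈ ω.parts, (mn C ∈ anc k ω u ↔ mn C ∈ anc k ω v)) : u = v := by
  have key : ∀ w w' : ℕ, Vtx k ω w → Vtx k ω w' →
      (∀ C ∈ ω.parts, (mn C ∈ anc k ω w ↔ mn C ∈ anc k ω w')) → w ≤ w' := by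
    intro w w' hw hw' hiff
    rcases hw with h0 | ⟨hws, hwm⟩
    · omega
    · have hC : ω.part w ∈ ω.parts := (ω.part_mem.mpr hws)
      have hmn : mn (ω.part w) = w := hwm
      have h1 : mn (ω.part w) ∈ anc k ω w := by
        rw [hmn]; exact mem_anc_self k ω w
      have h2 := (hiff _ hC).mp h1
      rw [hmn] at h2
      exact anc_le k ω h2
  exact le_antisymm (key u v hu hv h)
    (key v u hv hu (fun C hC => (h C hC).symm))

/-- number of elements of `C` that are `≤ m`. -/
def cnt (C : Finset ℕ) (m : ℕ) : ℕ := (C.filter (fun x => x ≤ m)).card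

lemma cnt_zero {C : Finset ℕ} (hC : C ∈ ω.parts) : cnt C 0 = 0 := by
  unfold cnt
  rw [Finset.card_eq_zero, Finset.filter_eq_empty_iff]
  intro x hx
  have := Finset.mem_Icc.mp (ω.le hC hx)
  omega

lemma cnt_succ {C : Finset ℕ} {m : ℕ} (hm : 1 ≤ m) :
    cnt C m = cnt C (m - 1) + (if m ∈ C then 1 else 0) := by
  unfold cnt
  have : C.filter (fun x => x ≤ m) =
      (C.filter (fun x => x ≤ m - 1)) ∪ (C.filter (fun x => x = m)) := by
    ext x
    simp only [Finset.mem_union, Finset.mem_filter]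
    constructor
    · rintro ⟨hx, hle⟩
      by_cases hxm : x = m
      · exact Or.inr ⟨hx, hxm⟩
      · exact Or.inl ⟨hx, by omega⟩
    · rintro (⟨hx, hle⟩ | ⟨hx, heq⟩)
      · exact ⟨hx, by omega⟩
      · exact ⟨hx, by omega⟩
  rw [this, Finset.card_union_of_disjoint]
  · congr 1
    by_cases hm2 : m ∈ C
    · simp only [hm2, if_true]
      rw [Finset.filter_eq']
      simp [hm2]
    · simp only [hm2, if_false]
      rw [Finset.filter_eq']
      simp [hm2]
  · rw [Finset.disjoint_filter]
    intro x _ hx; omega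

lemma cnt_full {C : Finset ℕ} (hC : C ∈ ω.parts) : cnt C (2 * k) = C.card := by
  unfold cnt
  rw [Finset.filter_true_of_mem]
  intro x hx
  exact (Finset.mem_Icc.mp (ω.le hC hx)).2

lemma cnt_split {C : Finset ℕ} {a m : ℕ} (ha : a ≤ m) :
    cnt C m = cnt C a + (C ∩ Finset.Ioc a m).card := by
  unfold cnt
  rw [← Finset.card_union_of_disjoint]
  · congr 1
    ext x
    simp only [Finset.mem_union, Finset.mem_filter, Finset.mem_inter, Finset.mem_Ioc]
    constructor
    · rintro ⟨hx, hle⟩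
      by_cases hxa : x ≤ a
      · exact Or.inl ⟨hx, hxa⟩
      · exact Or.inr ⟨hx, by omega, hle⟩
    · rintro (⟨hx, hle⟩ | ⟨hx, h1, h2⟩)
      · exact ⟨hx, by omega⟩
      · exact ⟨hx, h2⟩
  · rw [Finset.disjoint_left]
    intro x hx hx2
    simp only [Finset.mem_filter] at hx
    simp only [Finset.mem_inter, Finset.mem_Ioc] at hx2
    omega


/-- previous occurrence within the block. -/
def pv (k : ℕ) (ω : Finpartition (Finset.Icc 1 (2 * k))) (i : ℕ) : ℕ :=
  WithBot.unbotD 0 ((ω.part i) ∩ Finset.Iio i).max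

lemma pv_spec {i : ℕ} (hi : i ∈ Finset.Icc 1 (2 * k)) (hne : mB k ω i ≠ i) :
    pv k ω i ∈ ω.part i ∧ pv k ω i < i ∧
      (∀ x ∈ ω.part i, x < i → x ≤ pv k ω i) := by
  have hmlt : mB k ω i < i := lt_of_le_of_ne (mB_le k ω hi) hne
  have hne2 : ((ω.part i) ∩ Finset.Iio i).Nonempty :=
    ⟨mB k ω i, Finset.mem_inter.mpr ⟨mB_mem k ω hi, Finset.mem_Iio.mpr hmlt⟩⟩
  obtain ⟨a, ha⟩ := Finset.max_of_nonempty hne2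
  have hmem := Finset.mem_of_max ha
  have hpv : pv k ω i = a := by simp [pv, ha]
  rw [Finset.mem_inter, Finset.mem_Iio] at hmem
  refine ⟨by rw [hpv]; exact hmem.1, by rw [hpv]; exact hmem.2, ?_⟩
  intro x hx hxi
  rw [hpv]
  exact Finset.le_max_of_eq (Finset.mem_inter.mpr ⟨hx, Finset.mem_Iio.mpr hxi⟩) ha

/-- The invariant: open blocks are exactly ancestors of the current label. -/
def INV (k : ℕ) (ω : Finpartition (Finset.Icc 1 (2 * k))) (m : ℕ) : Prop :=
  ∀ C ∈ ω.parts, (Odd (cnt C m) ↔ mn C ∈ anc k ω (lam k ω m))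

def OCC (k : ℕ) (ω : Finpartition (Finset.Icc 1 (2 * k))) (m : ℕ) : Prop :=
  m ∈ Finset.Icc 1 (2 * k) →
    ((Odd (cnt (ω.part m) m) → lam k ω m = mB k ω m) ∧
      (¬Odd (cnt (ω.part m) m) → lam k ω m = lam k ω (mB k ω m - 1)))

def CONS (k : ℕ) (ω : Finpartition (Finset.Icc 1 (2 * k))) (m : ℕ) : Prop :=
  m ∈ Finset.Icc 1 (2 * k) → mB k ω m ≠ m →
    lam k ω (m - 1) = lam k ω (tg k ω m)

/-- Special symmetric partition (as in the main statement). -/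
def SSpec : Prop :=
  (∀ B ∈ ω.parts, Even B.card) ∧
    ∀ B ∈ ω.parts, ∀ i ∈ B, ∀ j ∈ B, i < j → (∀ x ∈ B, ¬(i < x ∧ x < j)) →
      ∀ B' ∈ ω.parts, B' ≠ B →
        Even (B' ∩ Finset.Ioo i j).card ∧
          ((B' ∩ Finset.Ioo i j).filter fun x => Odd x).card =
            ((B' ∩ Finset.Ioo i j).filter fun x => Even x).card

lemma SSpec_iff : SSpec k ω ↔ SpecialSymmetric ω := Iff.rfl

theorem ssMain (hss : SSpec k ω) :
    ∀ m, m ≤ 2 * k → INV k ω m ∧ OCC k ω m ∧ CONS k ω m := by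
  intro m
  induction m using Nat.strong_induction_on with
  | _ m ih =>
    intro hm2k
    by_cases hm0 : m = 0
    · subst hm0
      refine ⟨?_, ?_, ?_⟩
      · intro C hC
        rw [cnt_zero k ω hC, lam_zero, anc_zero]
        have h1 := mn_mem_s k ω hC
        rw [Finset.mem_Icc] at h1
        simp only [Finset.mem_singleton]
        constructor
        · intro h; exact absurd h (by decide)
        · intro h; omega
      · intro hms; rw [Finset.mem_Icc] at hms; omega
      · intro hms; rw [Finset.mem_Icc] at hms; omega
    · have hms : m ∈ Finset.Icc 1 (2 * k) := Finset.mem_Icc.mpr ⟨by omega, hm2k⟩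
      set B := ω.part m with hBdef
      have hB : B ∈ ω.parts := (ω.part_mem.mpr hms)
      have hmB : m ∈ B := ω.mem_part hms
      set t := mB k ω m with htdef
      have hts : t ∈ Finset.Icc 1 (2 * k) := mB_mem_s k ω hms
      have ht1 : 1 ≤ t ∧ t ≤ 2 * k := Finset.mem_Icc.mp hts
      have htm : t ≤ m := mB_le k ω hms
      have hmnB : mn B = t := mn_part k ω
      have hlamt : lam k ω t = t := lam_min k ω hts (mB_self k ω hms)
      have hanct : anc k ω t = insert t (anc k ω (lam k ω (t - 1))) :=
        anc_succ k ω (by omega)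
      have htnotanc : t ∉ anc k ω (lam k ω (t - 1)) := by
        apply not_mem_anc_of_gt
        have := lam_le k ω (t - 1); omega
      by_cases heq : t = m
      · -- first occurrence
        have hlamm : lam k ω m = m := lam_min k ω hms heq
        have hcnt0 : cnt B (m - 1) = 0 := by
          unfold cnt
          rw [Finset.card_eq_zero, Finset.filter_eq_empty_iff]
          intro x hx
          have := mB_min k ω hms hx
          omega
        have hcntm : cnt B m = 1 := by
          rw [cnt_succ (hm := by omega), hcnt0, if_pos hmB]
        have hancm : anc k ω m = insert m (anc k ω (lam k ω (m - 1))) :=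
          anc_succ k ω hm0
        refine ⟨?_, ?_, ?_⟩
        · intro C hC
          by_cases hmC : m ∈ C
          · have hCB : C = B := (mem_part_iff k ω hC hms).mp hmC
            subst hCB
            rw [hcntm, hlamm, hancm, hmnB, heq]
            simp
          · have hmnCne : mn C ≠ m := by
              intro h; exact hmC (h ▸ mn_mem k ω hC)
            have hcntC : cnt C m = cnt C (m - 1) := by
              rw [cnt_succ (hm := by omega), if_neg hmC]
              omega
            rw [hcntC, hlamm, hancm, Finset.mem_insert]
            have hINV := (ih (m - 1) (by omega) (by omega)).1 C hC
            rw [hINV]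
            constructor
            · intro h; exact Or.inr h
            · rintro (h | h)
              · exact absurd h hmnCne
              · exact h
        · intro _
          constructor
          · intro _; rw [hlamm]; exact heq.symm
          · intro hodd; exfalso; rw [← hBdef, hcntm] at hodd; exact hodd ⟨0, rfl⟩
        · intro _ hne2; exact absurd heq hne2
      · -- later occurrence
        have hne : mB k ω m ≠ m := fun h => heq h
        have htltm : t < m := lt_of_le_of_ne htm hne
        obtain ⟨hpvB, hpvlt, hpvmax⟩ := pv_spec k ω hms hne
        set q := pv k ω m with hqdef
        have hqs : q ∈ Finset.Icc 1 (2 * k) := ω.le hB hpvB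
        have hq1 : 1 ≤ q ∧ q ≤ 2 * k := Finset.mem_Icc.mp hqs
        have hpartq : ω.part q = B := part_eq_of_mem_part k ω hms hpvB
        have hmBq : mB k ω q = t := (mB_eq_mn k ω hB hpvB).trans hmnB
        have hnobetween : B ∩ Finset.Ioo q m = ∅ := by
          rw [Finset.eq_empty_iff_forall_notMem]
          intro x hx
          rw [Finset.mem_inter, Finset.mem_Ioo] at hx
          exact absurd (hpvmax x hx.1 hx.2.2) (by omega)
        -- interval parity
        have hIoc : Finset.Ioc q (m - 1) = Finset.Ioo q m := by
          ext x; simp only [Finset.mem_Ioc, Finset.mem_Ioo]; omega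
        have hcntiff : ∀ C ∈ ω.parts, cnt C (m - 1) % 2 = cnt C q % 2 := by
          intro C hC
          have hsplit := cnt_split (C := C) (a := q) (m := m - 1) (by omega)
          rw [hIoc] at hsplit
          by_cases hCB : C = B
          · subst hCB; rw [hsplit, hnobetween]; simp
          · have heven := (hss.2 B hB q hpvB m hmB hpvlt
              (by intro x hx hc; rw [Finset.eq_empty_iff_forall_notMem] at hnobetween
                  exact hnobetween x (Finset.mem_inter.mpr ⟨hx, Finset.mem_Ioo.mpr hc⟩))
              C hC hCB).1
            rw [Nat.even_iff] at heven
            omega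
        have hINVm1 := (ih (m - 1) (by omega) (by omega)).1
        have hINVq := (ih q (by omega) (by omega)).1
        have hlameq : lam k ω (m - 1) = lam k ω q := by
          apply anc_inj k ω (lam_vtx k ω (m - 1)) (lam_vtx k ω q)
          intro C hC
          rw [← hINVm1 C hC, ← hINVq C hC, Nat.odd_iff, Nat.odd_iff]
          rw [hcntiff C hC]
        have hcntBq : cnt B (m - 1) = cnt B q := by
          have hsplit := cnt_split (C := B) (a := q) (m := m - 1) (by omega)
          rw [hIoc, hnobetween] at hsplit
          simpa using hsplit
        have hOCCq := (ih q (by omega) (by omega)).2.1 hqs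
        rw [hpartq, hmBq] at hOCCq
        have hcntBsucc : cnt B m = cnt B (m - 1) + 1 := by
          rw [cnt_succ (hm := by omega), if_pos hmB]
        have hparmm1 : Even (lam k ω (m - 1)) ↔ Even (m - 1) :=
          lam_parity k ω (by omega)
        by_cases hodd : Odd (cnt B q)
        · -- closing occurrence
          have hlamq : lam k ω q = t := hOCCq.1 hodd
          have hlamm1 : lam k ω (m - 1) = t := by rw [hlameq, hlamq]
          have hparity : ¬ Even (m + t) := by
            rw [hlamm1] at hparmm1
            simp only [Nat.even_iff] at hparmm1 ⊢
            omega
          have hsg : sg k ω m = t - 1 := by unfold sg; rw [if_neg hparity]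
          have htg : tg k ω m = t := by unfold tg; rw [if_neg hparity]
          have hlamm : lam k ω m = lam k ω (t - 1) := by
            rw [lam_rec k ω hms hne, hsg]
          refine ⟨?_, ?_, ?_⟩
          · intro C hC
            by_cases hmC : m ∈ C
            · have hCB : C = B := (mem_part_iff k ω hC hms).mp hmC
              subst hCB
              rw [hmnB, hlamm]
              constructor
              · intro h
                exfalso
                rw [Nat.odd_iff] at h hodd
                omega
              · intro h; exact absurd h htnotanc
            · have hmnCne : mn C ≠ t := by
                intro h
                have htC : t ∈ C := by rw [← h]; exact mn_mem k ω hC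
                have : C = B := ω.eq_of_mem_parts hC hB htC (mB_mem k ω hms)
                exact hmC (this ▸ hmB)
              have hcntC : cnt C m = cnt C (m - 1) := by
                rw [cnt_succ (hm := by omega), if_neg hmC]
                omega
              rw [hcntC, hlamm]
              rw [hINVm1 C hC, hlamm1, hanct, Finset.mem_insert]
              constructor
              · rintro (h | h)
                · exact absurd h hmnCne
                · exact h
              · intro h; exact Or.inr h
          · intro _
            rw [← hBdef, ← htdef, hcntBsucc]
            constructor
            · intro h
              exfalso
              rw [Nat.odd_iff] at h hodd
              omega
            · intro _; exact hlamm
          · intro _ _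
            rw [htg, hlamt, hlamm1]
        · -- opening occurrence
          have hlamq : lam k ω q = lam k ω (t - 1) := hOCCq.2 hodd
          have hlamm1 : lam k ω (m - 1) = lam k ω (t - 1) := by rw [hlameq, hlamq]
          have hpart1 : Even (lam k ω (t - 1)) ↔ Even (t - 1) :=
            lam_parity k ω (by omega)
          have hparity : Even (m + t) := by
            rw [hlamm1] at hparmm1
            simp only [Nat.even_iff] at hparmm1 hpart1 ⊢
            omega
          have hsg : sg k ω m = t := by unfold sg; rw [if_pos hparity]
          have htg : tg k ω m = t - 1 := by unfold tg; rw [if_pos hparity]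
          have hlamm : lam k ω m = t := by
            rw [lam_rec k ω hms hne, hsg, hlamt]
          refine ⟨?_, ?_, ?_⟩
          · intro C hC
            by_cases hmC : m ∈ C
            · have hCB : C = B := (mem_part_iff k ω hC hms).mp hmC
              subst hCB
              rw [hmnB, hlamm, hcntBsucc]
              constructor
              · intro _; exact mem_anc_self k ω t
              · intro _
                rw [Nat.odd_iff] at hodd ⊢
                rw [hcntBq]
                omega
            · have hmnCne : mn C ≠ t := by
                intro h
                have htC : t ∈ C := by rw [← h]; exact mn_mem k ω hC
                have : C = B := ω.eq_of_mem_parts hC hB htC (mB_mem k ω hms)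
                exact hmC (this ▸ hmB)
              have hcntC : cnt C m = cnt C (m - 1) := by
                rw [cnt_succ (hm := by omega), if_neg hmC]
                omega
              rw [hcntC, hlamm, hINVm1 C hC, hlamm1, hanct, Finset.mem_insert]
              constructor
              · intro h; exact Or.inr h
              · rintro (h | h)
                · exact absurd h hmnCne
                · exact h
          · intro _
            rw [← hBdef, ← htdef, hcntBsucc, hcntBq]
            constructor
            · intro _; exact hlamm
            · intro h
              exfalso
              rw [Nat.odd_iff] at h hodd
              omega
          · intro _ _
            rw [htg, hlamm1]


theorem ss_closure (hss : SSpec k ω) : lam k ω (2 * k) = 0 := by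
  have hINV := (ssMain k ω hss (2 * k) le_rfl).1
  set u := lam k ω (2 * k) with hu
  rcases lam_vtx k ω (2 * k) with h0 | ⟨hus, hum⟩
  · exact h0
  · exfalso
    have hC : ω.part u ∈ ω.parts := (ω.part_mem.mpr hus)
    have h1 := hINV (ω.part u) hC
    rw [cnt_full k ω hC] at h1
    have heven := hss.1 (ω.part u) hC
    rw [Nat.even_iff] at heven
    have h2 : ¬ Odd (ω.part u).card := by rw [Nat.odd_iff]; omega
    have h3 : mn (ω.part u) ∈ anc k ω u := by
      rw [mn_part k ω, hum]
      exact mem_anc_self k ω u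
    exact h2 (h1.mpr h3)

theorem ss_cons (hss : SSpec k ω) :
    ∀ m ∈ Finset.Icc 1 (2 * k), mB k ω m ≠ m →
      lam k ω (m - 1) = lam k ω (tg k ω m) := by
  intro m hm hne
  have h2k : m ≤ 2 * k := (Finset.mem_Icc.mp hm).2
  exact (ssMain k ω hss m h2k).2.2 hm hne

/-! ### The converse direction -/

lemma pair_vals
    (hcons : ∀ m ∈ Finset.Icc 1 (2 * k), mB k ω m ≠ m →
      lam k ω (m - 1) = lam k ω (tg k ω m))
    {m : ℕ} (hm : m ∈ Finset.Icc 1 (2 * k)) :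
    lam k ω m = lam k ω (sg k ω m) ∧ lam k ω (m - 1) = lam k ω (tg k ω m) := by
  by_cases hne : mB k ω m = m
  · have hE : Even (m + mB k ω m) := by rw [hne]; exact ⟨m, rfl⟩
    have hsg : sg k ω m = m := by unfold sg; rw [if_pos hE, hne]
    have htg : tg k ω m = m - 1 := by unfold tg; rw [if_pos hE, hne]
    rw [hsg, htg]; exact ⟨rfl, rfl⟩
  · exact ⟨lam_rec k ω hm hne, hcons m hm hne⟩

/-- the open-indicator function. -/
def indF (k : ℕ) (ω : Finpartition (Finset.Icc 1 (2 * k))) (C : Finset ℕ)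
    (u : ℕ) : ℤ :=
  if mn C ∈ anc k ω u then 1 else 0

lemma step_lemma
    (hcons : ∀ m ∈ Finset.Icc 1 (2 * k), mB k ω m ≠ m →
      lam k ω (m - 1) = lam k ω (tg k ω m))
    {C : Finset ℕ} (hC : C ∈ ω.parts) {m : ℕ} (hm : m ∈ Finset.Icc 1 (2 * k)) :
    indF k ω C (lam k ω m) - indF k ω C (lam k ω (m - 1)) =
      if m ∈ C then (if Even (m + mn C) then (1 : ℤ) else -1) else 0 := by
  obtain ⟨hp1, hp2⟩ := pair_vals k ω hcons hm
  set t := mB k ω m with htdef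
  have hts : t ∈ Finset.Icc 1 (2 * k) := mB_mem_s k ω hm
  have ht1 : 1 ≤ t ∧ t ≤ 2 * k := Finset.mem_Icc.mp hts
  have hlamt : lam k ω t = t := lam_min k ω hts (mB_self k ω hm)
  have hanct : anc k ω t = insert t (anc k ω (lam k ω (t - 1))) :=
    anc_succ k ω (by omega)
  have htnotanc : t ∉ anc k ω (lam k ω (t - 1)) := by
    apply not_mem_anc_of_gt
    have := lam_le k ω (t - 1); omega
  have hmnCt : m ∈ C → mn C = t := by
    intro hmC
    rw [← mB_eq_mn k ω hC hmC]
  have hmnCnet : m ∉ C → mn C ≠ t := by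
    intro hmC h
    have htC : t ∈ C := by rw [← h]; exact mn_mem k ω hC
    have hpm : ω.part m ∈ ω.parts := (ω.part_mem.mpr hm)
    have : C = ω.part m := ω.eq_of_mem_parts hC hpm htC (mB_mem k ω hm)
    exact hmC (this ▸ ω.mem_part hm)
  by_cases hE : Even (m + t)
  · have hsg : sg k ω m = t := by unfold sg; rw [if_pos hE]
    have htg : tg k ω m = t - 1 := by unfold tg; rw [if_pos hE]
    rw [hp1, hp2, hsg, htg, hlamt]
    by_cases hmC : m ∈ C
    · have hmn := hmnCt hmC
      rw [if_pos hmC, if_pos (by rw [hmn]; exact hE)]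
      unfold indF
      rw [hmn, if_pos (mem_anc_self k ω t), if_neg htnotanc]
      norm_num
    · have hmn := hmnCnet hmC
      rw [if_neg hmC]
      unfold indF
      rw [hanct]
      have hmem : (mn C ∈ insert t (anc k ω (lam k ω (t - 1)))) ↔
          (mn C ∈ anc k ω (lam k ω (t - 1))) := by
        rw [Finset.mem_insert]
        constructor
        · rintro (h | h)
          · exact absurd h hmn
          · exact h
        · exact Or.inr
      by_cases h' : mn C ∈ anc k ω (lam k ω (t - 1))
      · rw [if_pos h', if_pos (hmem.mpr h')]; ring
      · rw [if_neg h', if_neg (fun hc => h' (hmem.mp hc))]; ring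
  · have hsg : sg k ω m = t - 1 := by unfold sg; rw [if_neg hE]
    have htg : tg k ω m = t := by unfold tg; rw [if_neg hE]
    rw [hp1, hp2, hsg, htg, hlamt]
    by_cases hmC : m ∈ C
    · have hmn := hmnCt hmC
      rw [if_pos hmC, if_neg (by rw [hmn]; exact hE)]
      unfold indF
      rw [hmn, if_pos (mem_anc_self k ω t), if_neg htnotanc]
      norm_num
    · have hmn := hmnCnet hmC
      rw [if_neg hmC]
      unfold indF
      rw [hanct]
      have hmem : (mn C ∈ insert t (anc k ω (lam k ω (t - 1)))) ↔
          (mn C ∈ anc k ω (lam k ω (t - 1))) := by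
        rw [Finset.mem_insert]
        constructor
        · rintro (h | h)
          · exact absurd h hmn
          · exact h
        · exact Or.inr
      by_cases h' : mn C ∈ anc k ω (lam k ω (t - 1))
      · rw [if_pos h', if_pos (hmem.mpr h')]; ring
      · rw [if_neg h', if_neg (fun hc => h' (hmem.mp hc))]; ring

lemma tele (f : ℕ → ℤ) (a : ℕ) : ∀ b, a ≤ b →
    ∑ m ∈ Finset.Icc (a + 1) b, (f m - f (m - 1)) = f b - f a := by
  intro b
  induction b with
  | zero => intro h; have : a = 0 := by omega
            subst this; simp
  | succ b ihb =>
    intro h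
    by_cases hab : a = b + 1
    · subst hab; simp
    · have hab2 : a ≤ b := by omega
      rw [Finset.sum_Icc_succ_top (by omega), ihb hab2]
      simp only [Nat.add_sub_cancel]
      ring

lemma sum_steps
    (hcons : ∀ m ∈ Finset.Icc 1 (2 * k), mB k ω m ≠ m →
      lam k ω (m - 1) = lam k ω (tg k ω m))
    {C : Finset ℕ} (hC : C ∈ ω.parts) {a b : ℕ} (hab : a ≤ b) (hb : b ≤ 2 * k) :
    indF k ω C (lam k ω b) - indF k ω C (lam k ω a) =
      ∑ m ∈ Finset.Icc (a + 1) b,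
        (if m ∈ C then (if Even (m + mn C) then (1 : ℤ) else -1) else 0) := by
  rw [← tele (fun u => indF k ω C (lam k ω u)) a b hab]
  apply Finset.sum_congr rfl
  intro m hm
  rw [Finset.mem_Icc] at hm
  exact step_lemma k ω hcons hC (Finset.mem_Icc.mpr ⟨by omega, by omega⟩)

lemma sum_pm (Y : Finset ℕ) (p : ℕ → Prop) [DecidablePred p] :
    ∑ m ∈ Y, (if p m then (1 : ℤ) else -1) =
      ((Y.filter p).card : ℤ) - ((Y.filter (fun m => ¬ p m)).card : ℤ) := by
  induction Y using Finset.induction with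
  | empty => simp
  | @insert a Y ha ih =>
    rw [Finset.sum_insert ha, ih, Finset.filter_insert, Finset.filter_insert]
    by_cases hpa : p a
    · rw [if_pos hpa, if_pos hpa, if_neg (fun h => h hpa)]
      rw [Finset.card_insert_of_notMem (fun h => ha (Finset.mem_filter.mp h).1)]
      push_cast
      ring
    · rw [if_neg hpa, if_neg hpa, if_pos hpa]
      rw [Finset.card_insert_of_notMem (fun h => ha (Finset.mem_filter.mp h).1)]
      push_cast
      ring

lemma sum_ite_count (C : Finset ℕ) (t : ℕ) (X : Finset ℕ) :
    ∑ m ∈ X, (if m ∈ C then (if Even (m + t) then (1 : ℤ) else -1) else 0) =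
      (((X ∩ C).filter (fun m => Even (m + t))).card : ℤ) -
        (((X ∩ C).filter (fun m => ¬Even (m + t))).card : ℤ) := by
  rw [← Finset.sum_filter, Finset.filter_mem_eq_inter, sum_pm]

lemma count_parity {Y : Finset ℕ} {t : ℕ}
    (h : (Y.filter (fun m => Even (m + t))).card =
      (Y.filter (fun m => ¬Even (m + t))).card) :
    ((Y.filter fun x => Odd x).card = (Y.filter fun x => Even x).card ∧
      Even Y.card) := by
  constructor
  · rcases Nat.even_or_odd t with ht | ht
    · rw [Nat.even_iff] at ht
      have h1 : Y.filter (fun m => Even (m + t)) = Y.filter (fun x => Even x) := by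
        apply Finset.filter_congr
        intro x _
        rw [Nat.even_add]
        simp only [Nat.even_iff]
        omega
      have h2 : Y.filter (fun m => ¬Even (m + t)) = Y.filter (fun x => Odd x) := by
        apply Finset.filter_congr
        intro x _
        rw [Nat.even_add]
        simp only [Nat.even_iff, Nat.odd_iff]
        omega
      rw [h1, h2] at h
      omega
    · rw [Nat.odd_iff] at ht
      have h1 : Y.filter (fun m => Even (m + t)) = Y.filter (fun x => Odd x) := by
        apply Finset.filter_congr
        intro x _
        rw [Nat.even_add]
        simp only [Nat.even_iff, Nat.odd_iff]
        omega
      have h2 : Y.filter (fun m => ¬Even (m + t)) = Y.filter (fun x => Even x) := by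
        apply Finset.filter_congr
        intro x _
        rw [Nat.even_add]
        simp only [Nat.even_iff, Nat.odd_iff]
        omega
      rw [h1, h2] at h
      omega
  · have := Finset.card_filter_add_card_filter_not
      (s := Y) (p := fun m => Even (m + t))
    rw [← this, h]
    exact ⟨_, rfl⟩

theorem lam_to_ss
    (hclos : lam k ω (2 * k) = 0)
    (hcons : ∀ m ∈ Finset.Icc 1 (2 * k), mB k ω m ≠ m →
      lam k ω (m - 1) = lam k ω (tg k ω m)) :
    SSpec k ω := by
  have hind0 : ∀ C ∈ ω.parts, indF k ω C 0 = 0 := by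
    intro C hC
    unfold indF
    rw [anc_zero, if_neg]
    intro h
    rw [Finset.mem_singleton] at h
    have := mn_mem_s k ω hC
    rw [Finset.mem_Icc] at this
    omega
  constructor
  · -- every block has even cardinality
    intro B hB
    have hsum := sum_steps k ω hcons hB (Nat.zero_le (2 * k)) le_rfl
    rw [hclos, lam_zero, hind0 B hB, sub_self, sum_ite_count] at hsum
    have hXB : Finset.Icc (0 + 1) (2 * k) ∩ B = B := by
      apply Finset.inter_eq_right.mpr
      intro x hx
      exact ω.le hB hx
    rw [hXB] at hsum
    have hcard : (B.filter (fun m => Even (m + mn B))).card =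
        (B.filter (fun m => ¬Even (m + mn B))).card := by omega
    exact (count_parity hcard).2
  · -- interval condition
    intro B hB i hi j hj hij hbetween C hC hCB
    have his : i ∈ Finset.Icc 1 (2 * k) := ω.le hB hi
    have hjs : j ∈ Finset.Icc 1 (2 * k) := ω.le hB hj
    have hi1 : 1 ≤ i ∧ i ≤ 2 * k := Finset.mem_Icc.mp his
    have hj1 : 1 ≤ j ∧ j ≤ 2 * k := Finset.mem_Icc.mp hjs
    have hIoo : Finset.Icc (i + 1) (j - 1) = Finset.Ioo i j := by
      ext x; simp only [Finset.mem_Icc, Finset.mem_Ioo]; omega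
    -- first, λ i = λ (j-1) via the B-telescope
    set t := mB k ω i with htdef
    have hmBj : mB k ω j = t := by
      rw [htdef, mB_eq_mn k ω hB hi, mB_eq_mn k ω hB hj]
    have hts : t ∈ Finset.Icc 1 (2 * k) := mB_mem_s k ω his
    have ht1 : 1 ≤ t ∧ t ≤ 2 * k := Finset.mem_Icc.mp hts
    have hlamt : lam k ω t = t := lam_min k ω hts (mB_self k ω his)
    have hmnB : mn B = t := by rw [htdef, mB_eq_mn k ω hB hi]
    have htnotanc : t ∉ anc k ω (lam k ω (t - 1)) := by
      apply not_mem_anc_of_gt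
      have := lam_le k ω (t - 1); omega
    have hlam_i : lam k ω i = t ∨ lam k ω i = lam k ω (t - 1) := by
      have hp := (pair_vals k ω hcons his).1
      by_cases hE : Even (i + t)
      · left; rw [hp]
        have : sg k ω i = t := by unfold sg; rw [← htdef, if_pos hE]
        rw [this, hlamt]
      · right; rw [hp]
        have : sg k ω i = t - 1 := by unfold sg; rw [← htdef, if_neg hE]
        rw [this]
    have hlam_j1 : lam k ω (j - 1) = t ∨ lam k ω (j - 1) = lam k ω (t - 1) := by
      have hp := (pair_vals k ω hcons hjs).2
      by_cases hE : Even (j + t)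
      · right; rw [hp]
        have : tg k ω j = t - 1 := by
          unfold tg; rw [hmBj, if_pos hE]
        rw [this]
      · left; rw [hp]
        have : tg k ω j = t := by
          unfold tg; rw [hmBj, if_neg hE]
        rw [this, hlamt]
    have hBsum := sum_steps k ω hcons hB (a := i) (b := j - 1)
      (by omega) (by omega)
    have hBzero : ∑ m ∈ Finset.Icc (i + 1) (j - 1),
        (if m ∈ B then (if Even (m + mn B) then (1 : ℤ) else -1) else 0) = 0 := by
      apply Finset.sum_eq_zero
      intro m hm
      rw [hIoo] at hm
      rw [Finset.mem_Ioo] at hm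
      rw [if_neg]
      intro hmb
      exact hbetween m hmb ⟨hm.1, hm.2⟩
    rw [hBzero] at hBsum
    have hindB : indF k ω B (lam k ω (j - 1)) = indF k ω B (lam k ω i) := by omega
    have hlam_eq : lam k ω (j - 1) = lam k ω i := by
      have hv1 : indF k ω B t = 1 := by
        unfold indF; rw [if_pos (by rw [hmnB]; exact mem_anc_self k ω t)]
      have hv0 : indF k ω B (lam k ω (t - 1)) = 0 := by
        unfold indF; rw [if_neg (by rw [hmnB]; exact htnotanc)]
      rcases hlam_i with h1 | h1 <;> rcases hlam_j1 with h2 | h2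
      · rw [h1, h2]
      · exfalso; rw [h1, h2, hv0, hv1] at hindB; omega
      · exfalso; rw [h1, h2, hv1, hv0] at hindB; omega
      · rw [h1, h2]
    -- now the C-telescope
    have hCsum := sum_steps k ω hcons hC (a := i) (b := j - 1)
      (by omega) (by omega)
    rw [hlam_eq, sub_self, sum_ite_count] at hCsum
    have hX : Finset.Icc (i + 1) (j - 1) ∩ C = C ∩ Finset.Ioo i j := by
      rw [hIoo, Finset.inter_comm]
    rw [hX] at hCsum
    have hcard : ((C ∩ Finset.Ioo i j).filter (fun m => Even (m + mn C))).card =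
        ((C ∩ Finset.Ioo i j).filter (fun m => ¬Even (m + mn C))).card := by omega
    obtain ⟨hodd, heven⟩ := count_parity hcard
    exact ⟨heven, hodd⟩


/-! ### Counting -/

/-- the set of generating vertices. -/
def TF (k : ℕ) (ω : Finpartition (Finset.Icc 1 (2 * k))) : Finset ℕ :=
  insert 0 (ω.parts.image mn)

lemma mem_TF_iff {u : ℕ} : u ∈ TF k ω ↔ Vtx k ω u := by
  unfold TF Vtx
  rw [Finset.mem_insert, Finset.mem_image]
  constructor
  · rintro (h0 | ⟨C, hC, rfl⟩)
    · exact Or.inl h0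
    · refine Or.inr ⟨mn_mem_s k ω hC, ?_⟩
      exact mB_eq_mn k ω hC (mn_mem k ω hC)
  · rintro (h0 | ⟨hus, hum⟩)
    · exact Or.inl h0
    · right
      refine ⟨ω.part u, (ω.part_mem.mpr hus), ?_⟩
      rw [mn_part k ω, hum]

lemma mn_injOn : Set.InjOn mn (ω.parts : Set (Finset ℕ)) := by
  intro C hC C' hC' h
  rw [Finset.mem_coe] at hC hC'
  have h1 : mn C ∈ C := mn_mem k ω hC
  have h2 : mn C ∈ C' := h ▸ mn_mem k ω hC'
  exact ω.eq_of_mem_parts hC hC' h1 h2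

lemma zero_not_mem_image : 0 ∉ ω.parts.image mn := by
  rw [Finset.mem_image]
  rintro ⟨C, hC, h⟩
  have := mn_mem_s k ω hC
  rw [Finset.mem_Icc] at this
  omega

lemma TF_card : (TF k ω).card = ω.parts.card + 1 := by
  unfold TF
  rw [Finset.card_insert_of_notMem (zero_not_mem_image k ω),
    Finset.card_image_of_injOn (mn_injOn k ω)]

lemma TF_even_card :
    ((TF k ω).filter (fun t => Even t)).card =
      (ω.parts.filter (fun C => Even (mn C))).card + 1 := by
  unfold TF
  rw [Finset.filter_insert, if_pos (Even.zero)]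
  rw [Finset.card_insert_of_notMem
    (fun h => zero_not_mem_image k ω (Finset.mem_of_mem_filter _ h))]
  congr 1
  rw [Finset.filter_image]
  rw [Finset.card_image_of_injOn
    (Set.InjOn.mono (fun x hx => Finset.mem_coe.mpr
      (Finset.mem_of_mem_filter _ (Finset.mem_coe.mp hx))) (mn_injOn k ω))]

lemma TF_odd_card :
    ((TF k ω).filter (fun t => ¬ Even t)).card =
      (TF k ω).card - (((TF k ω).filter (fun t => Even t)).card) := by
  have := Finset.card_filter_add_card_filter_not
    (s := TF k ω) (p := fun t => Even t)
  omega

lemma r_lt_b (hk : 1 ≤ k) :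
    (ω.parts.filter (fun C => Even (mn C))).card + 1 ≤ ω.parts.card := by
  have h1s : (1 : ℕ) ∈ Finset.Icc 1 (2 * k) := Finset.mem_Icc.mpr ⟨le_refl 1, by omega⟩
  have hpart1 : ω.part 1 ∈ ω.parts := (ω.part_mem.mpr h1s)
  have hmn1 : mn (ω.part 1) = 1 := by
    rw [mn_part k ω]
    have h1 := mB_le k ω h1s
    have h2 := mB_mem_s k ω h1s
    rw [Finset.mem_Icc] at h2
    omega
  have hnot : ω.part 1 ∉ ω.parts.filter (fun C => Even (mn C)) := by
    rw [Finset.mem_filter, hmn1]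
    rintro ⟨-, h⟩
    exact (by decide : ¬ Even 1) h
  have hsub : ω.parts.filter (fun C => Even (mn C)) ⊆ ω.parts.erase (ω.part 1) := by
    intro C hC
    rw [Finset.mem_erase]
    exact ⟨fun h => hnot (h ▸ hC), Finset.mem_of_mem_filter _ hC⟩
  calc (ω.parts.filter (fun C => Even (mn C))).card + 1
      ≤ (ω.parts.erase (ω.part 1)).card + 1 := by
        exact Nat.add_le_add_right (Finset.card_le_card hsub) 1
    _ = ω.parts.card := by
        rw [Finset.card_erase_of_mem hpart1]
        have : 1 ≤ ω.parts.card := Finset.card_pos.mpr ⟨_, hpart1⟩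
        omega

/-- the admissible range of a generating vertex. -/
noncomputable def rng (p n : ℕ) (t : ℕ) : Finset ℤ :=
  if Even t then Finset.Icc 1 (p : ℤ) else Finset.Icc 1 (n : ℤ)

/-- all parity-admissible functions supported on `T'`. -/
noncomputable def HS (p n : ℕ) (T' : Finset ℕ) : Finset (ℕ → ℤ) :=
  (T'.pi (fun t => rng p n t)).image
    (fun f m => if h : m ∈ T' then f m h else 0)

lemma mem_HS_iff {p n : ℕ} {T' : Finset ℕ} {h : ℕ → ℤ} :
    h ∈ HS p n T' ↔ ((∀ t ∈ T', h t ∈ rng p n t) ∧ ∀ m, m ∉ T' → h m = 0) := by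
  unfold HS
  rw [Finset.mem_image]
  constructor
  · rintro ⟨f, hf, rfl⟩
    rw [Finset.mem_pi] at hf
    constructor
    · intro t ht
      simp only [dif_pos ht]
      exact hf t ht
    · intro m hm
      simp only [dif_neg hm]
  · rintro ⟨h1, h2⟩
    refine ⟨fun a _ => h a, Finset.mem_pi.mpr (fun a ha => h1 a ha), ?_⟩
    funext m
    by_cases hm : m ∈ T'
    · simp only [dif_pos hm]
    · simp only [dif_neg hm]
      exact (h2 m hm).symm

lemma HS_card (p n : ℕ) (T' : Finset ℕ) :
    (HS p n T').card =
      p ^ (T'.filter (fun t => Even t)).card *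
        n ^ (T'.filter (fun t => ¬ Even t)).card := by
  unfold HS
  rw [Finset.card_image_of_injOn]
  · rw [Finset.card_pi]
    have : ∀ t ∈ T', (rng p n t).card = if Even t then p else n := by
      intro t _
      unfold rng
      split
      · rw [Int.card_Icc]; omega
      · rw [Int.card_Icc]; omega
    rw [Finset.prod_congr rfl this, Finset.prod_ite, Finset.prod_const,
      Finset.prod_const]
  · intro f hf g hg hfg
    funext a ha
    have := congrFun hfg a
    simp only [dif_pos ha] at this
    exact this


/-! ### Circuits -/

lemma sameBlock_iff {i j : ℕ} (hi : i ∈ Finset.Icc 1 (2 * k))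
    (hj : j ∈ Finset.Icc 1 (2 * k)) :
    sameBlock ω i j ↔ ω.part i = ω.part j := by
  constructor
  · rintro ⟨B, hB, hiB, hjB⟩
    rw [ω.part_eq_of_mem hB hiB, ω.part_eq_of_mem hB hjB]
  · intro h
    exact ⟨ω.part i, (ω.part_mem.mpr hi), ω.mem_part hi, h ▸ ω.mem_part hj⟩

lemma sameBlock_mB {m : ℕ} (hm : m ∈ Finset.Icc 1 (2 * k)) :
    sameBlock ω m (mB k ω m) :=
  ⟨ω.part m, (ω.part_mem.mpr hm), ω.mem_part hm, mB_mem k ω hm⟩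

/-- positions within a block determine each other's vertices. -/
lemma entry_comp {p n : ℕ} {π : ℕ → ℤ} (hπ : π ∈ PiS p n k ω) {m : ℕ}
    (hm : m ∈ Finset.Icc 1 (2 * k)) :
    π m = π (sg k ω m) ∧ π (m - 1) = π (tg k ω m) := by
  set t := mB k ω m with htdef
  have hts : t ∈ Finset.Icc 1 (2 * k) := mB_mem_s k ω hm
  have ht1 : 1 ≤ t ∧ t ≤ 2 * k := Finset.mem_Icc.mp hts
  have hm1 : 1 ≤ m ∧ m ≤ 2 * k := Finset.mem_Icc.mp hm
  have heq : entryIdx π m = entryIdx π t :=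
    (hπ.2 m hm t hts).mp (sameBlock_mB k ω hm)
  unfold entryIdx at heq
  rcases Nat.even_or_odd m with hme | hmo
  · have hnoddm : ¬ Odd m := by rw [Nat.even_iff] at hme; rw [Nat.odd_iff]; omega
    rw [if_neg hnoddm] at heq
    rcases Nat.even_or_odd t with hte | hto
    · have hnoddt : ¬ Odd t := by rw [Nat.even_iff] at hte; rw [Nat.odd_iff]; omega
      rw [if_neg hnoddt, Prod.mk.injEq] at heq
      have hE : Even (m + t) := Even.add hme hte
      have hsg : sg k ω m = t := by unfold sg; rw [if_pos hE]
      have htg : tg k ω m = t - 1 := by unfold tg; rw [if_pos hE]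
      rw [hsg, htg]
      exact ⟨heq.1, heq.2⟩
    · have hoddt : Odd t := hto
      rw [if_pos hoddt, Prod.mk.injEq] at heq
      have hE : ¬ Even (m + t) := by
        rw [Nat.even_iff] at hme ⊢; rw [Nat.odd_iff] at hto; omega
      have hsg : sg k ω m = t - 1 := by unfold sg; rw [if_neg hE]
      have htg : tg k ω m = t := by unfold tg; rw [if_neg hE]
      rw [hsg, htg]
      exact ⟨heq.1, heq.2⟩
  · have hoddm : Odd m := hmo
    rw [if_pos hoddm] at heq
    rcases Nat.even_or_odd t with hte | hto
    · have hnoddt : ¬ Odd t := by rw [Nat.even_iff] at hte; rw [Nat.odd_iff]; omega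
      rw [if_neg hnoddt, Prod.mk.injEq] at heq
      have hE : ¬ Even (m + t) := by
        rw [Nat.even_iff] at hte ⊢; rw [Nat.odd_iff] at hmo; omega
      have hsg : sg k ω m = t - 1 := by unfold sg; rw [if_neg hE]
      have htg : tg k ω m = t := by unfold tg; rw [if_neg hE]
      rw [hsg, htg]
      exact ⟨heq.2, heq.1⟩
    · rw [if_pos hto, Prod.mk.injEq] at heq
      have hE : Even (m + t) := by
        rw [Nat.odd_iff] at hmo hto; rw [Nat.even_iff]; omega
      have hsg : sg k ω m = t := by unfold sg; rw [if_pos hE]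
      have htg : tg k ω m = t - 1 := by unfold tg; rw [if_pos hE]
      rw [hsg, htg]
      exact ⟨heq.2, heq.1⟩

/-- exact circuits are determined by their values on generating vertices. -/
lemma determination {p n : ℕ} {π : ℕ → ℤ} (hπ : π ∈ PiS p n k ω) :
    ∀ m, m ≤ 2 * k → π m = π (lam k ω m) := by
  intro m
  induction m using Nat.strong_induction_on with
  | _ m ih =>
    intro hm2k
    by_cases hs : m ∈ Finset.Icc 1 (2 * k)
    · by_cases h2 : mB k ω m = m
      · rw [lam_min k ω hs h2]
      · rw [lam_rec k ω hs h2]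
        have hlt := sg_lt k ω hs h2
        rw [(entry_comp k ω hπ hs).1]
        exact ih _ hlt (by omega)
    · rw [Finset.mem_Icc] at hs
      have : m = 0 := by omega
      subst this
      rw [lam_zero]
lemma circ_range {p n : ℕ} {π : ℕ → ℤ} (hc : IsCircuit p n k π) {u : ℕ}
    (hu : u ≤ 2 * k) :
    π u ∈ rng p n u := by
  unfold rng
  by_cases hue : Even u
  · rw [if_pos hue]
    rw [Nat.even_iff] at hue
    have h := hc.2.1 (u / 2) (by omega)
    have h2 : 2 * (u / 2) = u := by omega
    rw [h2] at h
    rw [Finset.mem_Icc]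
    exact h
  · rw [if_neg hue]
    rw [Nat.even_iff] at hue
    have h := hc.2.2.1 ((u + 1) / 2) (by omega) (by omega)
    have h2 : 2 * ((u + 1) / 2) - 1 = u := by omega
    rw [h2] at h
    rw [Finset.mem_Icc]
    exact h

/-- restriction of a circuit to the generating vertices. -/
noncomputable def restr (k : ℕ) (ω : Finpartition (Finset.Icc 1 (2 * k)))
    (π : ℕ → ℤ) : ℕ → ℤ :=
  fun m => if m ∈ TF k ω then π m else 0

/-- extension of a generating assignment to a full circuit. -/
def extf (k : ℕ) (ω : Finpartition (Finset.Icc 1 (2 * k))) (h : ℕ → ℤ) :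
    ℕ → ℤ :=
  fun m => if m ≤ 2 * k then h (lam k ω m) else 0

lemma lam_TF (i : ℕ) : lam k ω i ∈ TF k ω :=
  (mem_TF_iff k ω).mpr (lam_vtx k ω i)

lemma lam_fix {t : ℕ} (ht : t ∈ TF k ω) : lam k ω t = t := by
  rcases (mem_TF_iff k ω).mp ht with h0 | ⟨hts, htm⟩
  · rw [h0, lam_zero]
  · exact lam_min k ω hts htm

lemma TF_le {t : ℕ} (ht : t ∈ TF k ω) : t ≤ 2 * k := by
  rcases (mem_TF_iff k ω).mp ht with h0 | ⟨hts, -⟩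
  · omega
  · exact (Finset.mem_Icc.mp hts).2

lemma restr_mem_HS {p n : ℕ} {π : ℕ → ℤ} (hπ : π ∈ PiS p n k ω) :
    restr k ω π ∈ HS p n (TF k ω) := by
  rw [mem_HS_iff]
  constructor
  · intro t ht
    unfold restr
    rw [if_pos ht]
    exact circ_range k hπ.1 (TF_le k ω ht)
  · intro m hm
    unfold restr
    rw [if_neg hm]

lemma extf_restr {p n : ℕ} {π : ℕ → ℤ} (hπ : π ∈ PiS p n k ω) :
    π = extf k ω (restr k ω π) := by
  funext m
  unfold extf restr
  by_cases hm : m ≤ 2 * k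
  · rw [if_pos hm, if_pos (lam_TF k ω m)]
    exact determination k ω hπ m hm
  · rw [if_neg hm]
    exact hπ.1.2.2.2 m (by omega)

lemma restr_injOn {p n : ℕ} :
    Set.InjOn (restr k ω) (PiS p n k ω) := by
  intro x hx y hy hxy
  rw [extf_restr k ω hx, extf_restr k ω hy, hxy]


/-! ### Edge endpoints of a position -/

def pE (k : ℕ) (ω : Finpartition (Finset.Icc 1 (2 * k))) (i : ℕ) : ℕ :=
  lam k ω (if Even i then i else i - 1)

def pO (k : ℕ) (ω : Finpartition (Finset.Icc 1 (2 * k))) (i : ℕ) : ℕ :=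
  lam k ω (if Even i then i - 1 else i)

lemma entry_extf (h : ℕ → ℤ) {i : ℕ} (hi : i ∈ Finset.Icc 1 (2 * k)) :
    entryIdx (extf k ω h) i = (h (pE k ω i), h (pO k ω i)) := by
  have hi1 : 1 ≤ i ∧ i ≤ 2 * k := Finset.mem_Icc.mp hi
  unfold entryIdx extf pE pO
  rcases Nat.even_or_odd i with he | ho
  · have hnodd : ¬ Odd i := by rw [Nat.even_iff] at he; rw [Nat.odd_iff]; omega
    rw [if_neg hnodd, if_pos (by omega : i ≤ 2 * k),
      if_pos (by omega : i - 1 ≤ 2 * k), if_pos he, if_pos he]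
  · have hnev : ¬ Even i := by rw [Nat.odd_iff] at ho; rw [Nat.even_iff]; omega
    rw [if_pos ho, if_pos (by omega : i ≤ 2 * k),
      if_pos (by omega : i - 1 ≤ 2 * k), if_neg hnev, if_neg hnev]

lemma pE_pO_block
    (hcons : ∀ m ∈ Finset.Icc 1 (2 * k), mB k ω m ≠ m →
      lam k ω (m - 1) = lam k ω (tg k ω m))
    {m : ℕ} (hm : m ∈ Finset.Icc 1 (2 * k)) :
    pE k ω m = (if Even (mB k ω m) then mB k ω m else lam k ω (mB k ω m - 1)) ∧
      pO k ω m = (if Even (mB k ω m) then lam k ω (mB k ω m - 1) else mB k ω m) := by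
  obtain ⟨hp1, hp2⟩ := pair_vals k ω hcons hm
  set t := mB k ω m with htdef
  have hts : t ∈ Finset.Icc 1 (2 * k) := mB_mem_s k ω hm
  have ht1 : 1 ≤ t ∧ t ≤ 2 * k := Finset.mem_Icc.mp hts
  have hm1 : 1 ≤ m ∧ m ≤ 2 * k := Finset.mem_Icc.mp hm
  have hlamt : lam k ω t = t := lam_min k ω hts (mB_self k ω hm)
  unfold pE pO
  rcases Nat.even_or_odd m with hme | hmo
  · rw [if_pos hme, if_pos hme]
    rcases Nat.even_or_odd t with hte | hto
    · have hE : Even (m + t) := Even.add hme hte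
      have hsg : sg k ω m = t := by unfold sg; rw [if_pos hE]
      have htg : tg k ω m = t - 1 := by unfold tg; rw [if_pos hE]
      rw [if_pos hte, if_pos hte, hp1, hp2, hsg, htg, hlamt]
      exact ⟨rfl, rfl⟩
    · have hE : ¬ Even (m + t) := by
        rw [Nat.even_iff] at hme ⊢; rw [Nat.odd_iff] at hto; omega
      have hnte : ¬ Even t := by rw [Nat.odd_iff] at hto; rw [Nat.even_iff]; omega
      have hsg : sg k ω m = t - 1 := by unfold sg; rw [if_neg hE]
      have htg : tg k ω m = t := by unfold tg; rw [if_neg hE]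
      rw [if_neg hnte, if_neg hnte, hp1, hp2, hsg, htg, hlamt]
      exact ⟨rfl, rfl⟩
  · have hnme : ¬ Even m := by rw [Nat.odd_iff] at hmo; rw [Nat.even_iff]; omega
    rw [if_neg hnme, if_neg hnme]
    rcases Nat.even_or_odd t with hte | hto
    · have hE : ¬ Even (m + t) := by
        rw [Nat.even_iff] at hte ⊢; rw [Nat.odd_iff] at hmo; omega
      have hsg : sg k ω m = t - 1 := by unfold sg; rw [if_neg hE]
      have htg : tg k ω m = t := by unfold tg; rw [if_neg hE]
      rw [if_pos hte, if_pos hte, hp1, hp2, hsg, htg, hlamt]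
      exact ⟨rfl, rfl⟩
    · have hE : Even (m + t) := by
        rw [Nat.odd_iff] at hmo hto; rw [Nat.even_iff]; omega
      have hnte : ¬ Even t := by rw [Nat.odd_iff] at hto; rw [Nat.even_iff]; omega
      have hsg : sg k ω m = t := by unfold sg; rw [if_pos hE]
      have htg : tg k ω m = t - 1 := by unfold tg; rw [if_pos hE]
      rw [if_neg hnte, if_neg hnte, hp1, hp2, hsg, htg, hlamt]
      exact ⟨rfl, rfl⟩

lemma pEpO_congr
    (hcons : ∀ m ∈ Finset.Icc 1 (2 * k), mB k ω m ≠ m →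
      lam k ω (m - 1) = lam k ω (tg k ω m))
    {i j : ℕ} (hi : i ∈ Finset.Icc 1 (2 * k)) (hj : j ∈ Finset.Icc 1 (2 * k))
    (hsb : sameBlock ω i j) :
    pE k ω i = pE k ω j ∧ pO k ω i = pO k ω j := by
  have hpq : ω.part i = ω.part j := (sameBlock_iff k ω hi hj).mp hsb
  have hmBij : mB k ω i = mB k ω j := mB_part_eq k ω hi hj hpq
  obtain ⟨h1, h2⟩ := pE_pO_block k ω hcons hi
  obtain ⟨h3, h4⟩ := pE_pO_block k ω hcons hj
  rw [h1, h2, h3, h4, hmBij]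
  exact ⟨rfl, rfl⟩

lemma pE_even {i : ℕ} (hi : i ∈ Finset.Icc 1 (2 * k)) : Even (pE k ω i) := by
  have hi1 : 1 ≤ i ∧ i ≤ 2 * k := Finset.mem_Icc.mp hi
  unfold pE
  rcases Nat.even_or_odd i with he | ho
  · rw [if_pos he, lam_parity k ω (by omega)]; exact he
  · have hnev : ¬ Even i := by rw [Nat.odd_iff] at ho; rw [Nat.even_iff]; omega
    rw [if_neg hnev, lam_parity k ω (by omega)]
    rw [Nat.odd_iff] at ho; rw [Nat.even_iff]; omega

lemma pO_odd {i : ℕ} (hi : i ∈ Finset.Icc 1 (2 * k)) : ¬ Even (pO k ω i) := by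
  have hi1 : 1 ≤ i ∧ i ≤ 2 * k := Finset.mem_Icc.mp hi
  unfold pO
  rcases Nat.even_or_odd i with he | ho
  · have h2 : 2 ≤ i := by
      rw [Nat.even_iff] at he; omega
    rw [if_pos he, lam_parity k ω (by omega)]
    rw [Nat.even_iff] at he ⊢; omega
  · have hnev : ¬ Even i := by rw [Nat.odd_iff] at ho; rw [Nat.even_iff]; omega
    rw [if_neg hnev, lam_parity k ω (by omega)]
    exact hnev

/-- the good-assignment predicate. -/
def GSpred (k : ℕ) (ω : Finpartition (Finset.Icc 1 (2 * k))) (h : ℕ → ℤ) : Prop :=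
  ∀ i ∈ Finset.Icc 1 (2 * k), ∀ j ∈ Finset.Icc 1 (2 * k),
    ¬ sameBlock ω i j →
      (h (pE k ω i), h (pO k ω i)) ≠ (h (pE k ω j), h (pO k ω j))

/-- the good assignments. -/
noncomputable def GS (p n k : ℕ) (ω : Finpartition (Finset.Icc 1 (2 * k))) :
    Finset (ℕ → ℤ) :=
  @Finset.filter _ (GSpred k ω) (Classical.decPred _) (HS p n (TF k ω))

lemma mem_GS_iff {p n : ℕ} {h : ℕ → ℤ} :
    h ∈ GS p n k ω ↔ h ∈ HS p n (TF k ω) ∧ GSpred k ω h :=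
  @Finset.mem_filter _ (GSpred k ω) (Classical.decPred _) _ _

theorem pis_eq_GS {p n : ℕ}
    (hclos : lam k ω (2 * k) = 0)
    (hcons : ∀ m ∈ Finset.Icc 1 (2 * k), mB k ω m ≠ m →
      lam k ω (m - 1) = lam k ω (tg k ω m)) :
    PiS p n k ω = extf k ω '' ↑(GS p n k ω) := by
  ext π
  constructor
  · intro hπ
    refine ⟨restr k ω π, ?_, (extf_restr k ω hπ).symm⟩
    rw [Finset.mem_coe, mem_GS_iff]
    refine ⟨restr_mem_HS k ω hπ, ?_⟩
    intro i hi j hj hnsb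
    have hne : entryIdx π i ≠ entryIdx π j := fun hc => hnsb ((hπ.2 i hi j hj).mpr hc)
    have he : π = extf k ω (restr k ω π) := extf_restr k ω hπ
    rw [he, entry_extf k ω _ hi, entry_extf k ω _ hj] at hne
    exact hne
  · rintro ⟨h, hh, rfl⟩
    rw [Finset.mem_coe, mem_GS_iff k ω] at hh
    obtain ⟨hHS, hgood⟩ := hh
    rw [mem_HS_iff] at hHS
    have hval : ∀ u, u ≤ 2 * k → extf k ω h u = h (lam k ω u) := by
      intro u hu
      unfold extf
      rw [if_pos hu]
    have hrange : ∀ u, u ≤ 2 * k → extf k ω h u ∈ rng p n u := by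
      intro u hu
      rw [hval u hu]
      have h1 := hHS.1 _ (lam_TF k ω u)
      unfold rng at h1 ⊢
      by_cases he : Even u
      · rw [if_pos he]
        rw [if_pos ((lam_parity k ω hu).mpr he)] at h1
        exact h1
      · rw [if_neg he]
        rw [if_neg (fun hc => he ((lam_parity k ω hu).mp hc))] at h1
        exact h1
    constructor
    · refine ⟨?_, ?_, ?_, ?_⟩
      · rw [hval 0 (by omega), hval (2 * k) le_rfl, lam_zero, hclos]
      · intro i hik
        have := hrange (2 * i) (by omega)
        unfold rng at this
        rw [if_pos ⟨i, by omega⟩, Finset.mem_Icc] at this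
        exact this
      · intro i hi1 hik
        have := hrange (2 * i - 1) (by omega)
        unfold rng at this
        rw [if_neg (by rw [Nat.even_iff]; omega), Finset.mem_Icc] at this
        exact this
      · intro i hi
        unfold extf
        rw [if_neg (by omega)]
    · intro i hi j hj
      constructor
      · intro hsb
        rw [entry_extf k ω h hi, entry_extf k ω h hj]
        obtain ⟨h1, h2⟩ := pEpO_congr k ω hcons hi hj hsb
        rw [h1, h2]
      · intro hent
        by_contra hnsb
        rw [entry_extf k ω h hi, entry_extf k ω h hj] at hent
        exact hgood i hi j hj hnsb hent

lemma extf_injOn_GS {p n : ℕ} :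
    Set.InjOn (extf k ω) ↑(GS p n k ω) := by
  intro h1 hh1 h2 hh2 heq
  rw [Finset.mem_coe, mem_GS_iff k ω] at hh1 hh2
  have hm1 := mem_HS_iff.mp hh1.1
  have hm2 := mem_HS_iff.mp hh2.1
  funext m
  by_cases hm : m ∈ TF k ω
  · have hle : m ≤ 2 * k := TF_le k ω hm
    have := congrFun heq m
    unfold extf at this
    rw [if_pos hle, if_pos hle, lam_fix k ω hm] at this
    exact this
  · rw [hm1.2 m hm, hm2.2 m hm]

theorem ncard_PiS_eq {p n : ℕ}
    (hclos : lam k ω (2 * k) = 0)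
    (hcons : ∀ m ∈ Finset.Icc 1 (2 * k), mB k ω m ≠ m →
      lam k ω (m - 1) = lam k ω (tg k ω m)) :
    (PiS p n k ω).ncard = (GS p n k ω).card := by
  rw [pis_eq_GS k ω hclos hcons, Set.ncard_image_of_injOn (extf_injOn_GS k ω),
    Set.ncard_coe_finset]


/-! ### Final counting bounds -/

def EPSpred (t1 t2 : ℕ) (g : ℕ → ℤ) : Prop := g t1 = g t2

noncomputable def EPS (p n : ℕ) (T' : Finset ℕ) (t1 t2 : ℕ) : Finset (ℕ → ℤ) :=
  @Finset.filter _ (EPSpred t1 t2) (Classical.decPred _) (HS p n T')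

lemma mem_EPS_iff {p n : ℕ} {T' : Finset ℕ} {t1 t2 : ℕ} {h : ℕ → ℤ} :
    h ∈ EPS p n T' t1 t2 ↔ h ∈ HS p n T' ∧ h t1 = h t2 :=
  @Finset.mem_filter _ (EPSpred t1 t2) (Classical.decPred _) _ h

lemma EPS_card_le {p n t1 t2 : ℕ} (h1 : t1 ∈ TF k ω) (h2 : t2 ∈ TF k ω)
    (hne : t1 ≠ t2) (hpar : Even t1 ↔ Even t2) :
    (EPS p n (TF k ω) t1 t2).card ≤
      p ^ (((TF k ω).filter (fun t => Even t)).card - 1) *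
          n ^ (((TF k ω).filter (fun t => ¬ Even t)).card) +
        p ^ (((TF k ω).filter (fun t => Even t)).card) *
          n ^ (((TF k ω).filter (fun t => ¬ Even t)).card - 1) := by
  have hinj : Set.InjOn (fun h : ℕ → ℤ => Function.update h t2 0)
      ↑(EPS p n (TF k ω) t1 t2) := by
    intro f hf g hg hfg
    rw [Finset.mem_coe, mem_EPS_iff] at hf hg
    funext m
    by_cases hm : m = t2
    · subst hm
      rw [← hf.2, ← hg.2]
      have := congrFun hfg t1
      simpa [Function.update_of_ne hne] using this
    · have := congrFun hfg m
      simpa [Function.update_of_ne hm] using this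
  have hmaps : ∀ h ∈ EPS p n (TF k ω) t1 t2,
      Function.update h t2 0 ∈ HS p n ((TF k ω).erase t2) := by
    intro h hh
    rw [mem_EPS_iff] at hh
    have hHS := mem_HS_iff.mp hh.1
    rw [mem_HS_iff]
    constructor
    · intro t ht
      rw [Finset.mem_erase] at ht
      rw [Function.update_of_ne ht.1]
      exact hHS.1 t ht.2
    · intro m hm
      by_cases hmt : m = t2
      · subst hmt; rw [Function.update_self]
      · rw [Function.update_of_ne hmt]
        apply hHS.2
        intro hmem
        exact hm (Finset.mem_erase.mpr ⟨hmt, hmem⟩)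
  have hcard : (EPS p n (TF k ω) t1 t2).card ≤
      (HS p n ((TF k ω).erase t2)).card := by
    apply Finset.card_le_card_of_injOn _ hmaps
    intro f hf g hg
    exact hinj (Finset.mem_coe.mpr hf) (Finset.mem_coe.mpr hg)
  rw [HS_card] at hcard
  rcases Nat.even_or_odd t2 with he | ho
  · have hmemf : t2 ∈ (TF k ω).filter (fun t => Even t) :=
      Finset.mem_filter.mpr ⟨h2, he⟩
    have hnm : t2 ∉ (TF k ω).filter (fun t => ¬ Even t) := by
      rw [Finset.mem_filter]; rintro ⟨-, hc⟩; exact hc he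
    rw [Finset.filter_erase, Finset.filter_erase, Finset.card_erase_of_mem hmemf,
      Finset.erase_eq_of_notMem hnm] at hcard
    exact le_trans hcard (Nat.le_add_right _ _)
  · have hno : ¬ Even t2 := by rw [Nat.odd_iff] at ho; rw [Nat.even_iff]; omega
    have hmemf : t2 ∈ (TF k ω).filter (fun t => ¬ Even t) :=
      Finset.mem_filter.mpr ⟨h2, hno⟩
    have hnm : t2 ∉ (TF k ω).filter (fun t => Even t) := by
      rw [Finset.mem_filter]; rintro ⟨-, hc⟩; exact hno hc
    rw [Finset.filter_erase, Finset.filter_erase, Finset.card_erase_of_mem hmemf,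
      Finset.erase_eq_of_notMem hnm] at hcard
    exact le_trans hcard (Nat.le_add_left _ _)

lemma good_of_inj
    (hcons : ∀ m ∈ Finset.Icc 1 (2 * k), mB k ω m ≠ m →
      lam k ω (m - 1) = lam k ω (tg k ω m))
    {h : ℕ → ℤ}
    (hinj : ∀ t1 ∈ TF k ω, ∀ t2 ∈ TF k ω, t1 ≠ t2 → (Even t1 ↔ Even t2) →
      h t1 ≠ h t2) :
    GSpred k ω h := by
  intro i hi j hj hnsb hcontra
  rw [Prod.mk.injEq] at hcontra
  have hpETF : ∀ m, pE k ω m ∈ TF k ω := fun m => lam_TF k ω _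
  have hpOTF : ∀ m, pO k ω m ∈ TF k ω := fun m => lam_TF k ω _
  have hpEeq : pE k ω i = pE k ω j := by
    by_contra hne
    exact hinj _ (hpETF i) _ (hpETF j) hne
      (by simp [pE_even k ω hi, pE_even k ω hj]) hcontra.1
  have hpOeq : pO k ω i = pO k ω j := by
    by_contra hne
    exact hinj _ (hpOTF i) _ (hpOTF j) hne
      (by simp [pO_odd k ω hi, pO_odd k ω hj]) hcontra.2
  have hmBne : mB k ω i ≠ mB k ω j := by
    intro hc
    apply hnsb
    rw [sameBlock_iff k ω hi hj]
    apply mn_injOn k ω (Finset.mem_coe.mpr ((ω.part_mem.mpr hi)))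
      (Finset.mem_coe.mpr ((ω.part_mem.mpr hj)))
    rw [mn_part k ω, mn_part k ω, hc]
  obtain ⟨hEi, hOi⟩ := pE_pO_block k ω hcons hi
  obtain ⟨hEj, hOj⟩ := pE_pO_block k ω hcons hj
  set t := mB k ω i with htdef
  set t' := mB k ω j with htdef'
  have hlt : lam k ω (t - 1) ≤ t - 1 := lam_le k ω _
  have hlt' : lam k ω (t' - 1) ≤ t' - 1 := lam_le k ω _
  have ht1 : 1 ≤ t := (Finset.mem_Icc.mp (mB_mem_s k ω hi)).1
  have ht1' : 1 ≤ t' := (Finset.mem_Icc.mp (mB_mem_s k ω hj)).1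
  rw [hEi, hEj] at hpEeq
  rw [hOi, hOj] at hpOeq
  rcases Nat.even_or_odd t with he | ho <;> rcases Nat.even_or_odd t' with he' | ho'
  · rw [if_pos he, if_pos he'] at hpEeq
    exact hmBne hpEeq
  · have hno' : ¬ Even t' := by rw [Nat.odd_iff] at ho'; rw [Nat.even_iff]; omega
    rw [if_pos he, if_neg hno'] at hpEeq
    rw [if_pos he, if_neg hno'] at hpOeq
    omega
  · have hno : ¬ Even t := by rw [Nat.odd_iff] at ho; rw [Nat.even_iff]; omega
    rw [if_neg hno, if_pos he'] at hpEeq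
    rw [if_neg hno, if_pos he'] at hpOeq
    omega
  · have hno : ¬ Even t := by rw [Nat.odd_iff] at ho; rw [Nat.even_iff]; omega
    have hno' : ¬ Even t' := by rw [Nat.odd_iff] at ho'; rw [Nat.even_iff]; omega
    rw [if_neg hno, if_neg hno'] at hpOeq
    exact hmBne hpOeq

lemma HS_le_GS_add {p n : ℕ}
    (hcons : ∀ m ∈ Finset.Icc 1 (2 * k), mB k ω m ≠ m →
      lam k ω (m - 1) = lam k ω (tg k ω m)) :
    (HS p n (TF k ω)).card ≤ (GS p n k ω).card +
      ((TF k ω).card * (TF k ω).card) *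
        (p ^ (((TF k ω).filter (fun t => Even t)).card - 1) *
            n ^ (((TF k ω).filter (fun t => ¬ Even t)).card) +
          p ^ (((TF k ω).filter (fun t => Even t)).card) *
            n ^ (((TF k ω).filter (fun t => ¬ Even t)).card - 1)) := by
  classical
  set Db := p ^ (((TF k ω).filter (fun t => Even t)).card - 1) *
      n ^ (((TF k ω).filter (fun t => ¬ Even t)).card) +
    p ^ (((TF k ω).filter (fun t => Even t)).card) *
      n ^ (((TF k ω).filter (fun t => ¬ Even t)).card - 1) with hDb
  set P := ((TF k ω) ×ˢ (TF k ω)).filter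
    (fun q => q.1 ≠ q.2 ∧ (Even q.1 ↔ Even q.2)) with hP
  have hsub : HS p n (TF k ω) ⊆
      GS p n k ω ∪ P.biUnion (fun q => EPS p n (TF k ω) q.1 q.2) := by
    intro h hh
    by_cases hni : ∃ t1 ∈ TF k ω, ∃ t2 ∈ TF k ω,
        t1 ≠ t2 ∧ (Even t1 ↔ Even t2) ∧ h t1 = h t2
    · obtain ⟨t1, ht1, t2, ht2, hne, hpar, hval⟩ := hni
      apply Finset.mem_union_right
      apply Finset.mem_biUnion.mpr
      refine ⟨(t1, t2), ?_, ?_⟩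
      · rw [hP, Finset.mem_filter, Finset.mem_product]
        exact ⟨⟨ht1, ht2⟩, hne, hpar⟩
      · rw [mem_EPS_iff]
        exact ⟨hh, hval⟩
    · apply Finset.mem_union_left
      rw [mem_GS_iff]
      refine ⟨hh, good_of_inj k ω hcons ?_⟩
      intro t1 ht1 t2 ht2 hne hpar hval
      exact hni ⟨t1, ht1, t2, ht2, hne, hpar, hval⟩
  calc (HS p n (TF k ω)).card
      ≤ (GS p n k ω ∪ P.biUnion (fun q => EPS p n (TF k ω) q.1 q.2)).card :=
        Finset.card_le_card hsub
    _ ≤ (GS p n k ω).card + (P.biUnion (fun q => EPS p n (TF k ω) q.1 q.2)).card :=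
        Finset.card_union_le _ _
    _ ≤ (GS p n k ω).card + ((TF k ω).card * (TF k ω).card) * Db := by
        apply Nat.add_le_add_left
        calc (P.biUnion (fun q => EPS p n (TF k ω) q.1 q.2)).card
            ≤ ∑ q ∈ P, (EPS p n (TF k ω) q.1 q.2).card := Finset.card_biUnion_le
          _ ≤ ∑ _q ∈ P, Db := by
              apply Finset.sum_le_sum
              intro q hq
              rw [hP, Finset.mem_filter, Finset.mem_product] at hq
              exact EPS_card_le k ω hq.1.1 hq.1.2 hq.2.1 hq.2.2
          _ = P.card * Db := by rw [Finset.sum_const, smul_eq_mul]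
          _ ≤ ((TF k ω).card * (TF k ω).card) * Db := by
              apply Nat.mul_le_mul_right
              calc P.card ≤ ((TF k ω) ×ˢ (TF k ω)).card := Finset.card_filter_le _ _
                _ = (TF k ω).card * (TF k ω).card := Finset.card_product _ _

lemma tg_le {m : ℕ} : tg k ω m ≤ mB k ω m := by
  unfold tg; split <;> omega

lemma collapse_pair {p n : ℕ}
    (hnl : ¬ (lam k ω (2 * k) = 0 ∧
      ∀ m ∈ Finset.Icc 1 (2 * k), mB k ω m ≠ m →
        lam k ω (m - 1) = lam k ω (tg k ω m))) :
    ∃ t1 ∈ TF k ω, ∃ t2 ∈ TF k ω, t1 ≠ t2 ∧ (Even t1 ↔ Even t2) ∧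
      ∀ π ∈ PiS p n k ω, π t1 = π t2 := by
  by_cases hclos : lam k ω (2 * k) = 0
  · have hcons : ¬ ∀ m ∈ Finset.Icc 1 (2 * k), mB k ω m ≠ m →
        lam k ω (m - 1) = lam k ω (tg k ω m) := fun hc => hnl ⟨hclos, hc⟩
    push_neg at hcons
    obtain ⟨m, hm, hne, hlne⟩ := hcons
    have hm1 : 1 ≤ m ∧ m ≤ 2 * k := Finset.mem_Icc.mp hm
    have hts : mB k ω m ∈ Finset.Icc 1 (2 * k) := mB_mem_s k ω hm
    have ht1 : 1 ≤ mB k ω m ∧ mB k ω m ≤ 2 * k := Finset.mem_Icc.mp hts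
    have htgle : tg k ω m ≤ 2 * k := le_trans (tg_le k ω) ht1.2
    refine ⟨lam k ω (m - 1), lam_TF k ω _, lam k ω (tg k ω m), lam_TF k ω _,
      hlne, ?_, ?_⟩
    · rw [lam_parity k ω (by omega), lam_parity k ω htgle]
      unfold tg
      by_cases hE : Even (m + mB k ω m)
      · rw [if_pos hE]
        rw [Nat.even_iff] at hE ⊢
        simp only [Nat.even_iff]
        omega
      · rw [if_neg hE]
        rw [Nat.even_iff] at hE
        simp only [Nat.even_iff]
        omega
    · intro π hπ
      have h1 : π (m - 1) = π (tg k ω m) := (entry_comp k ω hπ hm).2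
      rw [← determination k ω hπ (m - 1) (by omega),
        ← determination k ω hπ (tg k ω m) htgle]
      exact h1
  · refine ⟨0, by unfold TF; exact Finset.mem_insert_self 0 _,
      lam k ω (2 * k), lam_TF k ω _, fun hc => hclos hc.symm, ?_, ?_⟩
    · rw [lam_parity k ω le_rfl]
      constructor
      · intro _; exact ⟨k, by ring⟩
      · intro _; exact Even.zero
    · intro π hπ
      rw [← determination k ω hπ (2 * k) le_rfl]
      exact hπ.1.1

lemma PiS_finite {p n : ℕ} : (PiS p n k ω).Finite := by
  apply Set.Finite.of_finite_image _ (restr_injOn k ω (p := p) (n := n))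
  apply Set.Finite.subset (HS p n (TF k ω)).finite_toSet
  rintro _ ⟨π, hπ, rfl⟩
  exact Finset.mem_coe.mpr (restr_mem_HS k ω hπ)

theorem count_upper (p n : ℕ) :
    (PiS p n k ω).ncard ≤
      p ^ (((TF k ω).filter (fun t => Even t)).card) *
        n ^ (((TF k ω).filter (fun t => ¬ Even t)).card) := by
  rw [← HS_card p n (TF k ω)]
  have := Set.ncard_le_ncard_of_injOn (restr k ω)
    (fun π hπ => Finset.mem_coe.mpr (restr_mem_HS k ω hπ))
    (restr_injOn k ω) (HS p n (TF k ω)).finite_toSet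
  rwa [Set.ncard_coe_finset] at this

theorem count_notss (p n : ℕ) (hnss : ¬ SSpec k ω) :
    (PiS p n k ω).ncard ≤
      p ^ (((TF k ω).filter (fun t => Even t)).card - 1) *
          n ^ (((TF k ω).filter (fun t => ¬ Even t)).card) +
        p ^ (((TF k ω).filter (fun t => Even t)).card) *
          n ^ (((TF k ω).filter (fun t => ¬ Even t)).card - 1) := by
  have hnl : ¬ (lam k ω (2 * k) = 0 ∧
      ∀ m ∈ Finset.Icc 1 (2 * k), mB k ω m ≠ m →
        lam k ω (m - 1) = lam k ω (tg k ω m)) := by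
    intro hc
    exact hnss (lam_to_ss k ω hc.1 hc.2)
  obtain ⟨t1, ht1, t2, ht2, hne, hpar, hval⟩ := collapse_pair k ω (p := p) (n := n) hnl
  have hle : (PiS p n k ω).ncard ≤ (EPS p n (TF k ω) t1 t2).card := by
    have := Set.ncard_le_ncard_of_injOn (restr k ω)
      (fun π hπ => ?_) (restr_injOn k ω (p := p) (n := n))
      (EPS p n (TF k ω) t1 t2).finite_toSet
    · rwa [Set.ncard_coe_finset] at this
    · rw [Finset.mem_coe, mem_EPS_iff]
      refine ⟨restr_mem_HS k ω hπ, ?_⟩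
      unfold restr
      rw [if_pos ht1, if_pos ht2]
      exact hval π hπ
  exact le_trans hle (EPS_card_le k ω ht1 ht2 hne hpar)

theorem count_lower (p n : ℕ) (hss : SSpec k ω) :
    p ^ (((TF k ω).filter (fun t => Even t)).card) *
        n ^ (((TF k ω).filter (fun t => ¬ Even t)).card) ≤
      (PiS p n k ω).ncard +
        ((TF k ω).card * (TF k ω).card) *
          (p ^ (((TF k ω).filter (fun t => Even t)).card - 1) *
              n ^ (((TF k ω).filter (fun t => ¬ Even t)).card) +
            p ^ (((TF k ω).filter (fun t => Even t)).card) *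
              n ^ (((TF k ω).filter (fun t => ¬ Even t)).card - 1)) := by
  have hclos := ss_closure k ω hss
  have hcons := ss_cons k ω hss
  rw [ncard_PiS_eq k ω hclos hcons, ← HS_card p n (TF k ω)]
  exact HS_le_GS_add k ω hcons


lemma rIdx_mn : (ω.parts.filter (fun C => Even (mn C))).card = rIdx ω := by
  unfold rIdx
  congr 1
  apply Finset.filter_congr
  intro C hC
  have hne : C.Nonempty := ω.nonempty_of_mem_parts hC
  obtain ⟨a, ha⟩ := Finset.min_of_nonempty hne
  simp only [mn, ha]
  rfl

lemma counts_eq (hk : 1 ≤ k) :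
    ((TF k ω).filter (fun t => Even t)).card = rIdx ω + 1 ∧
      ((TF k ω).filter (fun t => ¬ Even t)).card = ω.parts.card - rIdx ω ∧
      rIdx ω + 1 ≤ ω.parts.card := by
  have h1 : ((TF k ω).filter (fun t => Even t)).card = rIdx ω + 1 := by
    rw [TF_even_card k ω, rIdx_mn k ω]
  have h3 : rIdx ω + 1 ≤ ω.parts.card := by
    rw [← rIdx_mn k ω]
    exact r_lt_b k ω hk
  refine ⟨h1, ?_, h3⟩
  rw [TF_odd_card k ω, h1, TF_card k ω]
  omega

theorem count_upper' (hk : 1 ≤ k) (p n : ℕ) :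
    (PiS p n k ω).ncard ≤
      p ^ (rIdx ω + 1) * n ^ (ω.parts.card - rIdx ω) := by
  obtain ⟨h1, h2, -⟩ := counts_eq k ω hk
  have := count_upper k ω p n
  rwa [h1, h2] at this

theorem count_notss' (hk : 1 ≤ k) (p n : ℕ) (hnss : ¬ SSpec k ω) :
    (PiS p n k ω).ncard ≤
      p ^ (rIdx ω) * n ^ (ω.parts.card - rIdx ω) +
        p ^ (rIdx ω + 1) * n ^ (ω.parts.card - rIdx ω - 1) := by
  obtain ⟨h1, h2, -⟩ := counts_eq k ω hk
  have := count_notss k ω p n hnss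
  rwa [h1, h2, Nat.add_sub_cancel] at this

theorem count_lower' (hk : 1 ≤ k) (p n : ℕ) (hss : SSpec k ω) :
    p ^ (rIdx ω + 1) * n ^ (ω.parts.card - rIdx ω) ≤
      (PiS p n k ω).ncard +
        ((ω.parts.card + 1) * (ω.parts.card + 1)) *
          (p ^ (rIdx ω) * n ^ (ω.parts.card - rIdx ω) +
            p ^ (rIdx ω + 1) * n ^ (ω.parts.card - rIdx ω - 1)) := by
  obtain ⟨h1, h2, -⟩ := counts_eq k ω hk
  have := count_lower k ω p n hss
  rwa [h1, h2, Nat.add_sub_cancel, TF_card k ω] at this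

end W

open Filter Topology

theorem statement4' (k b r : ℕ) (hk : 1 ≤ k)
    (ω : Finpartition (Finset.Icc 1 (2 * k)))
    (hωb : ω.parts.card = b) (hωr : rIdx ω = r)
    (p : ℕ → ℕ) (y : ℝ) (hy : 0 < y)
    (hp : Tendsto (fun n : ℕ => (p n : ℝ) / n) atTop (𝓝 y)) :
    (W.SSpec k ω →
      Tendsto (fun n : ℕ => ((PiS (p n) n k ω).ncard : ℝ) / (n : ℝ) ^ (b + 1))
        atTop (𝓝 (y ^ (r + 1)))) ∧
    (¬ W.SSpec k ω →
      Tendsto (fun n : ℕ => ((PiS (p n) n k ω).ncard : ℝ) / (n : ℝ) ^ (b + 1))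
        atTop (𝓝 0)) ∧
    (Tendsto (fun n : ℕ =>
        ((PiS (p n) n k ω).ncard : ℝ) / ((p n : ℝ) ^ (r + 1) * (n : ℝ) ^ (b - r)))
      atTop (𝓝 1) ↔ W.SSpec k ω) := by
  have hrb : r + 1 ≤ b := by
    rw [← hωb, ← hωr]
    exact (W.counts_eq k ω hk).2.2
  -- basic limits
  have hF1 : Tendsto (fun n : ℕ => (p n : ℝ)) atTop atTop := by
    have hev : ∀ᶠ n : ℕ in atTop, y / 2 * (n : ℝ) ≤ (p n : ℝ) := by
      filter_upwards [hp.eventually (eventually_gt_nhds (by linarith : y / 2 < y)),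
        eventually_ge_atTop 1] with n hn hn1
      have hn0 : (0 : ℝ) < (n : ℝ) := by
        have : (1 : ℝ) ≤ (n : ℝ) := by exact_mod_cast hn1
        linarith
      have := (lt_div_iff₀ hn0).mp hn
      linarith
    exact tendsto_atTop_mono' atTop hev
      (Tendsto.const_mul_atTop (by linarith) tendsto_natCast_atTop_atTop)
  have hFp : Tendsto (fun n : ℕ => ((p n : ℝ))⁻¹) atTop (𝓝 0) :=
    hF1.inv_tendsto_atTop
  have hFn : Tendsto (fun n : ℕ => ((n : ℝ))⁻¹) atTop (𝓝 0) :=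
    tendsto_inv_atTop_zero.comp tendsto_natCast_atTop_atTop
  have hpev : ∀ᶠ n : ℕ in atTop, 1 ≤ p n := by
    have := hF1.eventually_ge_atTop 1
    filter_upwards [this] with n hn
    exact_mod_cast hn
  -- cast bounds
  have hupR : ∀ n : ℕ, ((PiS (p n) n k ω).ncard : ℝ) ≤
      (p n : ℝ) ^ (r + 1) * (n : ℝ) ^ (b - r) := by
    intro n
    have h := W.count_upper' k ω hk (p n) n
    rw [hωb, hωr] at h
    exact_mod_cast h
  have hlowR : W.SSpec k ω → ∀ n : ℕ,
      (p n : ℝ) ^ (r + 1) * (n : ℝ) ^ (b - r) ≤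
        ((PiS (p n) n k ω).ncard : ℝ) +
          (((b + 1) * (b + 1) : ℕ) : ℝ) * ((p n : ℝ) ^ r * (n : ℝ) ^ (b - r) +
            (p n : ℝ) ^ (r + 1) * (n : ℝ) ^ (b - r - 1)) := by
    intro hss n
    have h := W.count_lower' k ω hk (p n) n hss
    rw [hωb, hωr] at h
    exact_mod_cast h
  have hnssR : ¬ W.SSpec k ω → ∀ n : ℕ,
      ((PiS (p n) n k ω).ncard : ℝ) ≤ (p n : ℝ) ^ r * (n : ℝ) ^ (b - r) +
        (p n : ℝ) ^ (r + 1) * (n : ℝ) ^ (b - r - 1) := by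
    intro hnss n
    have h := W.count_notss' k ω hk (p n) n hnss
    rw [hωb, hωr] at h
    exact_mod_cast h
  -- division identities
  have hdiv : ∀ n : ℕ, 1 ≤ n →
      ((p n : ℝ) ^ (r + 1) * (n : ℝ) ^ (b - r) / (n : ℝ) ^ (b + 1) =
        ((p n : ℝ) / (n : ℝ)) ^ (r + 1)) ∧
      ((p n : ℝ) ^ r * (n : ℝ) ^ (b - r) / (n : ℝ) ^ (b + 1) =
        ((p n : ℝ) / (n : ℝ)) ^ r * ((n : ℝ))⁻¹) ∧
      ((p n : ℝ) ^ (r + 1) * (n : ℝ) ^ (b - r - 1) / (n : ℝ) ^ (b + 1) =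
        ((p n : ℝ) / (n : ℝ)) ^ (r + 1) * ((n : ℝ))⁻¹) := by
    intro n hn
    have hn0 : (n : ℝ) ≠ 0 := Nat.cast_ne_zero.mpr (by omega)
    have e1 : (n : ℝ) ^ (b + 1) = (n : ℝ) ^ (r + 1) * (n : ℝ) ^ (b - r) := by
      rw [← pow_add]; congr 1; omega
    have e2 : (n : ℝ) ^ (b + 1) = (n : ℝ) ^ r * (n : ℝ) ^ (b - r) * (n : ℝ) := by
      rw [← pow_add, ← pow_succ]; congr 1; omega
    have e3 : (n : ℝ) ^ (b + 1) =
        (n : ℝ) ^ (r + 1) * (n : ℝ) ^ (b - r - 1) * (n : ℝ) := by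
      rw [← pow_add, ← pow_succ]; congr 1; omega
    refine ⟨?_, ?_, ?_⟩
    · rw [e1, div_pow, mul_div_mul_right _ _ (pow_ne_zero _ hn0)]
    · rw [e2, div_pow]
      field_simp
    · rw [e3, div_pow]
      field_simp
  have hposn : ∀ n : ℕ, 1 ≤ n → (0 : ℝ) < (n : ℝ) ^ (b + 1) := by
    intro n hn
    have : (0 : ℝ) < (n : ℝ) := by
      have : (1 : ℝ) ≤ (n : ℝ) := by exact_mod_cast hn
      linarith
    positivity
  have herrlim : Tendsto (fun n : ℕ =>
      ((p n : ℝ) / (n : ℝ)) ^ r * ((n : ℝ))⁻¹ +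
        ((p n : ℝ) / (n : ℝ)) ^ (r + 1) * ((n : ℝ))⁻¹) atTop (𝓝 0) := by
    have := ((hp.pow r).mul hFn).add ((hp.pow (r + 1)).mul hFn)
    simpa using this
  constructor
  · -- special symmetric case
    intro hss
    have hlowlim : Tendsto (fun n : ℕ =>
        ((p n : ℝ) / (n : ℝ)) ^ (r + 1) -
          (((b + 1) * (b + 1) : ℕ) : ℝ) * (((p n : ℝ) / (n : ℝ)) ^ r * ((n : ℝ))⁻¹ +
            ((p n : ℝ) / (n : ℝ)) ^ (r + 1) * ((n : ℝ))⁻¹)) atTop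
        (𝓝 (y ^ (r + 1))) := by
      have h2 := (hp.pow (r + 1)).sub
        (herrlim.const_mul ((((b + 1) * (b + 1) : ℕ) : ℝ)))
      simpa using h2
    apply tendsto_of_tendsto_of_tendsto_of_le_of_le' hlowlim (hp.pow (r + 1))
    · filter_upwards [eventually_ge_atTop 1] with n hn
      obtain ⟨hd1, hd2, hd3⟩ := hdiv n hn
      have hpos := hposn n hn
      rw [← hd3, ← hd2, ← hd1]
      have heq : (p n : ℝ) ^ (r + 1) * (n : ℝ) ^ (b - r) / (n : ℝ) ^ (b + 1) -
          (((b + 1) * (b + 1) : ℕ) : ℝ) *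
            ((p n : ℝ) ^ r * (n : ℝ) ^ (b - r) / (n : ℝ) ^ (b + 1) +
            (p n : ℝ) ^ (r + 1) * (n : ℝ) ^ (b - r - 1) / (n : ℝ) ^ (b + 1)) =
          ((p n : ℝ) ^ (r + 1) * (n : ℝ) ^ (b - r) -
            (((b + 1) * (b + 1) : ℕ) : ℝ) * ((p n : ℝ) ^ r * (n : ℝ) ^ (b - r) +
              (p n : ℝ) ^ (r + 1) * (n : ℝ) ^ (b - r - 1))) / (n : ℝ) ^ (b + 1) := by
        ring
      rw [heq]
      apply (div_le_div_iff_of_pos_right hpos).mpr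
      linarith [hlowR hss n]
    · filter_upwards [eventually_ge_atTop 1] with n hn
      rw [← (hdiv n hn).1]
      exact (div_le_div_iff_of_pos_right (hposn n hn)).mpr (hupR n)
  constructor
  · -- not special symmetric
    intro hnss
    apply tendsto_of_tendsto_of_tendsto_of_le_of_le'
      (tendsto_const_nhds (x := (0:ℝ))) herrlim
    · filter_upwards [eventually_ge_atTop 1] with n hn
      exact div_nonneg (Nat.cast_nonneg _) (le_of_lt (hposn n hn))
    · filter_upwards [eventually_ge_atTop 1] with n hn
      obtain ⟨-, hd2, hd3⟩ := hdiv n hn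
      rw [← hd3, ← hd2]
      have heq : (p n : ℝ) ^ r * (n : ℝ) ^ (b - r) / (n : ℝ) ^ (b + 1) +
          (p n : ℝ) ^ (r + 1) * (n : ℝ) ^ (b - r - 1) / (n : ℝ) ^ (b + 1) =
          ((p n : ℝ) ^ r * (n : ℝ) ^ (b - r) +
            (p n : ℝ) ^ (r + 1) * (n : ℝ) ^ (b - r - 1)) / (n : ℝ) ^ (b + 1) := by
        ring
      rw [heq]
      exact (div_le_div_iff_of_pos_right (hposn n hn)).mpr (hnssR hnss n)
  · -- the equivalence
    have hDpos : ∀ n : ℕ, 1 ≤ n → 1 ≤ p n →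
        (0 : ℝ) < (p n : ℝ) ^ (r + 1) * (n : ℝ) ^ (b - r) := by
      intro n hn hpn
      have h1 : (0 : ℝ) < (p n : ℝ) := by exact_mod_cast hpn
      have h2 : (0 : ℝ) < (n : ℝ) := by
        have : (1 : ℝ) ≤ (n : ℝ) := by exact_mod_cast hn
        linarith
      positivity
    have hdivD : ∀ n : ℕ, 1 ≤ n → 1 ≤ p n →
        ((p n : ℝ) ^ r * (n : ℝ) ^ (b - r)) /
            ((p n : ℝ) ^ (r + 1) * (n : ℝ) ^ (b - r)) = ((p n : ℝ))⁻¹ ∧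
          ((p n : ℝ) ^ (r + 1) * (n : ℝ) ^ (b - r - 1)) /
            ((p n : ℝ) ^ (r + 1) * (n : ℝ) ^ (b - r)) = ((n : ℝ))⁻¹ := by
      intro n hn hpn
      have hp0 : (p n : ℝ) ≠ 0 := Nat.cast_ne_zero.mpr (by omega)
      have hn0 : (n : ℝ) ≠ 0 := Nat.cast_ne_zero.mpr (by omega)
      have e4 : (n : ℝ) ^ (b - r) = (n : ℝ) ^ (b - r - 1) * (n : ℝ) := by
        rw [← pow_succ]; congr 1; omega
      constructor
      · rw [pow_succ]
        field_simp
      · rw [e4]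
        field_simp
    have hzero : ¬ W.SSpec k ω → Tendsto (fun n : ℕ =>
        ((PiS (p n) n k ω).ncard : ℝ) /
          ((p n : ℝ) ^ (r + 1) * (n : ℝ) ^ (b - r))) atTop (𝓝 0) := by
      intro hnss
      have hlim : Tendsto (fun n : ℕ => ((p n : ℝ))⁻¹ + ((n : ℝ))⁻¹) atTop
          (𝓝 0) := by
        have := hFp.add hFn
        simpa using this
      apply tendsto_of_tendsto_of_tendsto_of_le_of_le'
        (tendsto_const_nhds (x := (0:ℝ))) hlim
      · filter_upwards [eventually_ge_atTop 1, hpev] with n hn hpn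
        exact div_nonneg (Nat.cast_nonneg _) (le_of_lt (hDpos n hn hpn))
      · filter_upwards [eventually_ge_atTop 1, hpev] with n hn hpn
        obtain ⟨hd1, hd2⟩ := hdivD n hn hpn
        rw [← hd1, ← hd2]
        have heq : (p n : ℝ) ^ r * (n : ℝ) ^ (b - r) /
            ((p n : ℝ) ^ (r + 1) * (n : ℝ) ^ (b - r)) +
            (p n : ℝ) ^ (r + 1) * (n : ℝ) ^ (b - r - 1) /
            ((p n : ℝ) ^ (r + 1) * (n : ℝ) ^ (b - r)) =
            ((p n : ℝ) ^ r * (n : ℝ) ^ (b - r) +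
              (p n : ℝ) ^ (r + 1) * (n : ℝ) ^ (b - r - 1)) /
            ((p n : ℝ) ^ (r + 1) * (n : ℝ) ^ (b - r)) := by
          ring
        rw [heq]
        exact (div_le_div_iff_of_pos_right (hDpos n hn hpn)).mpr (hnssR hnss n)
    constructor
    · intro htend
      by_contra hnss
      have := tendsto_nhds_unique htend (hzero hnss)
      norm_num at this
    · intro hss
      have hlowlim : Tendsto (fun n : ℕ =>
          1 - (((b + 1) * (b + 1) : ℕ) : ℝ) * (((p n : ℝ))⁻¹ + ((n : ℝ))⁻¹))
          atTop (𝓝 1) := by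
        have hlim : Tendsto (fun n : ℕ => ((p n : ℝ))⁻¹ + ((n : ℝ))⁻¹) atTop
            (𝓝 0) := by
          have := hFp.add hFn
          simpa using this
        have h2 := (tendsto_const_nhds (x := (1:ℝ))).sub
          (hlim.const_mul ((((b + 1) * (b + 1) : ℕ) : ℝ)))
        simpa using h2
      apply tendsto_of_tendsto_of_tendsto_of_le_of_le' hlowlim tendsto_const_nhds
      · filter_upwards [eventually_ge_atTop 1, hpev] with n hn hpn
        obtain ⟨hd1, hd2⟩ := hdivD n hn hpn
        have hD := hDpos n hn hpn
        rw [← hd1, ← hd2]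
        have key : (1 : ℝ) ≤
            ((PiS (p n) n k ω).ncard : ℝ) /
              ((p n : ℝ) ^ (r + 1) * (n : ℝ) ^ (b - r)) +
            (((b + 1) * (b + 1) : ℕ) : ℝ) *
              ((p n : ℝ) ^ r * (n : ℝ) ^ (b - r) /
                  ((p n : ℝ) ^ (r + 1) * (n : ℝ) ^ (b - r)) +
                (p n : ℝ) ^ (r + 1) * (n : ℝ) ^ (b - r - 1) /
                  ((p n : ℝ) ^ (r + 1) * (n : ℝ) ^ (b - r))) := by
          have heq : ((PiS (p n) n k ω).ncard : ℝ) /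
              ((p n : ℝ) ^ (r + 1) * (n : ℝ) ^ (b - r)) +
              (((b + 1) * (b + 1) : ℕ) : ℝ) *
                ((p n : ℝ) ^ r * (n : ℝ) ^ (b - r) /
                    ((p n : ℝ) ^ (r + 1) * (n : ℝ) ^ (b - r)) +
                  (p n : ℝ) ^ (r + 1) * (n : ℝ) ^ (b - r - 1) /
                    ((p n : ℝ) ^ (r + 1) * (n : ℝ) ^ (b - r))) =
              (((PiS (p n) n k ω).ncard : ℝ) +
                (((b + 1) * (b + 1) : ℕ) : ℝ) *
                  ((p n : ℝ) ^ r * (n : ℝ) ^ (b - r) +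
                    (p n : ℝ) ^ (r + 1) * (n : ℝ) ^ (b - r - 1))) /
                ((p n : ℝ) ^ (r + 1) * (n : ℝ) ^ (b - r)) := by
            ring
          rw [heq, le_div_iff₀ hD, one_mul]
          exact hlowR hss n
        linarith
      · filter_upwards [eventually_ge_atTop 1, hpev] with n hn hpn
        rw [div_le_one (hDpos n hn hpn)]
        exact hupR n


/-- With `p(n)/n → y ∈ (0,∞)`: for a partition `ω` of `{1,…,2k}` with
`b` blocks and `r(ω) = r`, `|Π_S(ω)|/n^{b+1} → y^{r+1}` if `ω` is special symmetric and
`→ 0` otherwise; consequently `|Π_S(ω)|/(p^{r+1}·n^{b−r}) → 1` iff `ω` is special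
symmetric. -/
theorem statement4 (k b r : ℕ) (hk : 1 ≤ k)
    (ω : Finpartition (Finset.Icc 1 (2 * k)))
    (hωb : ω.parts.card = b) (hωr : rIdx ω = r)
    (p : ℕ → ℕ) (y : ℝ) (hy : 0 < y)
    (hp : Tendsto (fun n : ℕ => (p n : ℝ) / n) atTop (𝓝 y)) :
    (SpecialSymmetric ω →
      Tendsto (fun n : ℕ => ((PiS (p n) n k ω).ncard : ℝ) / (n : ℝ) ^ (b + 1))
        atTop (𝓝 (y ^ (r + 1)))) ∧
    (¬ SpecialSymmetric ω →
      Tendsto (fun n : ℕ => ((PiS (p n) n k ω).ncard : ℝ) / (n : ℝ) ^ (b + 1))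
        atTop (𝓝 0)) ∧
    (Tendsto (fun n : ℕ =>
        ((PiS (p n) n k ω).ncard : ℝ) / ((p n : ℝ) ^ (r + 1) * (n : ℝ) ^ (b - r)))
      atTop (𝓝 1) ↔ SpecialSymmetric ω) := by
  obtain ⟨h1, h2, h3⟩ := statement4' k b r hk ω hωb hωr p y hy hp
  refine ⟨fun hss => h1 ((W.SSpec_iff k ω).mpr hss),
    fun hnss => h2 (fun hc => hnss ((W.SSpec_iff k ω).mp hc)),
    h3.trans (W.SSpec_iff k ω)⟩

end RMT
end
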